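/- arXiv:2002.11349 — 5 statements merged into one kernel-verified Lean document; each statement's English description precedes it below -/
import Mathlib

section
/- Under the allocation rule ELinUCB-S, fix a sequence of context arrivals {x_t} and a click realization ρ. For any two bid vectors b and b′, and any round t, if agent i belongs to both active sets S_act(b, t) and S_act(b′, t), then μ_i^-(b, t)/b_i = μ_i^-(b′, t)/b_i′ and μ_i^+(b, t)/b_i = μ_i^+(b′, t)/b_i′, where μ_i^-(b, t) and μ_i^+(b, t) denote the lower and upper confidence bounds maintained by the algorithm for agent i at the beginning of round t when the bid vector is b. -/
/-!
ELinUCB-S (LinUCB-based allocation rule for single-slot SSA).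

The state of the algorithm consists of the active set `act`, the per-agent
matrices `A`, vectors `c`, and the lower/upper confidence bounds `lo`, `hi`.
`elinRun b α x r t` is the state at the beginning of round `t`
(i.e. after `t` completed rounds, rounds being numbered `0, 1, 2, …`),
when the bid vector is `b`, the learning parameter is `α`, the context
sequence is `x` and the click realization is `r` (where `r t i` tells whether
agent `i`'s ad would be clicked if displayed at round `t`).
-/

open Matrix
open scoped Classical

structure ELinState (n d : ℕ) where
  act : Finset (Fin n)
  A : Fin n → Matrix (Fin d) (Fin d) ℝ
  c : Fin n → (Fin d → ℝ)
  lo : Fin n → ℝ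
  hi : Fin n → ℝ

variable {n d : ℕ}

/-- Initial state: all agents active, `A_i = I_d`, `c_i = 0`, `μ_i^- = 0`, `μ_i^+ = b_i`. -/
def elinInit (b : Fin n → ℝ) : ELinState n d :=
  ⟨Finset.univ, fun _ => 1, fun _ => 0, fun _ => 0, b⟩

/-- The designated (round-robin) agent of round `t`. -/
def desig (n : ℕ) [NeZero n] (t : ℕ) : Fin n :=
  ⟨t % n, Nat.mod_lt t (NeZero.pos n)⟩

/-- One round of ELinUCB-S: exploration (with parameter and confidence-bound updates)
if the designated agent is active, exploitation (no updates) otherwise, followed by the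
elimination step. -/
noncomputable def elinStep [NeZero n] (b : Fin n → ℝ) (α : ℝ)
    (xt : Fin d → ℝ) (rt : Fin n → Bool) (t : ℕ) (st : ELinState n d) :
    ELinState n d :=
  let j : Fin n := desig n t
  let st1 : ELinState n d :=
    if j ∈ st.act then
      -- exploration round for agent j
      let A' := st.A j + vecMulVec xt xt
      let c' := st.c j + (if rt j then (1 : ℝ) else 0) • xt
      let θ : Fin d → ℝ := A'⁻¹ *ᵥ c'
      let γm := b j * (θ ⬝ᵥ xt - α * Real.sqrt (xt ⬝ᵥ (A'⁻¹ *ᵥ xt)))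
      let γp := b j * (θ ⬝ᵥ xt + α * Real.sqrt (xt ⬝ᵥ (A'⁻¹ *ᵥ xt)))
      let newlo : ℝ :=
        if st.lo j < st.hi j then
          if max (st.lo j) γm < min (st.hi j) γp then max (st.lo j) γm
          else (st.lo j + st.hi j) / 2
        else st.lo j
      let newhi : ℝ :=
        if st.lo j < st.hi j then
          if max (st.lo j) γm < min (st.hi j) γp then min (st.hi j) γp
          else (st.lo j + st.hi j) / 2
        else st.hi j
      { act := st.act
        A := Function.update st.A j A'
        c := Function.update st.c j c'
        lo := Function.update st.lo j newlo
        hi := Function.update st.hi j newhi }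
    else
      -- exploitation round: no parameter updates
      st
  -- elimination: remove every agent whose UCB is below the best LCB among active agents
  { st1 with act := st1.act.filter (fun i => ∀ k ∈ st1.act, st1.lo k ≤ st1.hi i) }

/-- State of ELinUCB-S at the beginning of round `t`. -/
noncomputable def elinRun [NeZero n] (b : Fin n → ℝ) (α : ℝ)
    (x : ℕ → Fin d → ℝ) (r : ℕ → Fin n → Bool) : ℕ → ELinState n d
  | 0 => elinInit b
  | t + 1 => elinStep b α (x t) (r t) t (elinRun b α x r t)

/-!
While agent `i` stays active, its statistics `A_i`, `c_i` are updated only from the contexts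
and clicks of the rounds in which it is designated, so they do not depend on the bids. The
candidate bounds `γ^∓` are `b_i` times a bid-independent quantity, and the interval update is
positively homogeneous, so `μ_i^∓ / b_i` evolves by a bid-independent recursion.
-/

noncomputable def intervalUpdate (lo hi γm γp : ℝ) : ℝ × ℝ :=
  if lo < hi then
    if max lo γm < min hi γp then (max lo γm, min hi γp) else ((lo + hi) / 2, (lo + hi) / 2)
  else (lo, hi)

theorem intervalUpdate_mul {a : ℝ} (ha : 0 < a) (lo hi γm γp : ℝ) :
    intervalUpdate (a * lo) (a * hi) (a * γm) (a * γp) = a • intervalUpdate lo hi γm γp := by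
  simp only [intervalUpdate, ← mul_max_of_nonneg _ _ ha.le, ← mul_min_of_nonneg _ _ ha.le,
    mul_lt_mul_iff_right₀ ha]
  split_ifs <;> ext <;> simp only [Prod.smul_mk, smul_eq_mul] <;> ring

noncomputable def ucbCenter (A : Matrix (Fin d) (Fin d) ℝ) (c x : Fin d → ℝ) : ℝ :=
  (A⁻¹ *ᵥ c) ⬝ᵥ x

noncomputable def ucbWidth (α : ℝ) (A : Matrix (Fin d) (Fin d) ℝ) (x : Fin d → ℝ) : ℝ :=
  α * Real.sqrt (x ⬝ᵥ (A⁻¹ *ᵥ x))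

def ELinState.AgreeNormalized (st st' : ELinState n d) (β β' : ℝ) (i : Fin n) : Prop :=
  st.A i = st'.A i ∧ st.c i = st'.c i ∧
    st.lo i / β = st'.lo i / β' ∧ st.hi i / β = st'.hi i / β'

section Step

variable [NeZero n] (b : Fin n → ℝ) (α : ℝ) (xt : Fin d → ℝ) (rt : Fin n → Bool)
  (t : ℕ) (st : ELinState n d)

theorem elinStep_act_subset : (elinStep b α xt rt t st).act ⊆ st.act := by
  intro k hk
  by_cases hj : desig n t ∈ st.act <;>
    simp only [elinStep, hj, if_pos, if_false, Finset.mem_filter] at hk <;>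
    exact hk.1

theorem elinStep_of_ne_desig {i : Fin n} (hi : i ≠ desig n t) :
    (elinStep b α xt rt t st).A i = st.A i ∧ (elinStep b α xt rt t st).c i = st.c i ∧
      (elinStep b α xt rt t st).lo i = st.lo i ∧ (elinStep b α xt rt t st).hi i = st.hi i := by
  by_cases hj : desig n t ∈ st.act <;> simp [elinStep, hj, Function.update_of_ne hi]

theorem elinStep_desig (hj : desig n t ∈ st.act) :
    let j := desig n t
    let st₁ := elinStep b α xt rt t st
    st₁.A j = st.A j + vecMulVec xt xt ∧
      st₁.c j = st.c j + (if rt j then (1 : ℝ) else 0) • xt ∧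
      (st₁.lo j, st₁.hi j) = intervalUpdate (st.lo j) (st.hi j)
        (b j * (ucbCenter (st₁.A j) (st₁.c j) xt - ucbWidth α (st₁.A j) xt))
        (b j * (ucbCenter (st₁.A j) (st₁.c j) xt + ucbWidth α (st₁.A j) xt)) := by
  simp only [elinStep, hj, if_true, Function.update_self]
  refine ⟨trivial, trivial, ?_⟩
  unfold intervalUpdate ucbCenter ucbWidth
  split_ifs <;> rfl

theorem elinStep_agreeNormalized {b' : Fin n → ℝ} {st' : ELinState n d} {i : Fin n}
    (hb : 0 < b i) (hb' : 0 < b' i) (hi : i ∈ st.act) (hi' : i ∈ st'.act)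
    (h : st.AgreeNormalized st' (b i) (b' i) i) :
    (elinStep b α xt rt t st).AgreeNormalized (elinStep b' α xt rt t st') (b i) (b' i) i := by
  obtain ⟨hA, hc, hlo, hhi⟩ := h
  by_cases hji : i = desig n t
  · subst hji
    obtain ⟨eA, ec, ebounds⟩ := elinStep_desig b α xt rt t st hi
    obtain ⟨eA', ec', ebounds'⟩ := elinStep_desig b' α xt rt t st' hi'
    have hA₁ : (elinStep b α xt rt t st).A (desig n t) =
        (elinStep b' α xt rt t st').A (desig n t) := by
      rw [eA, eA', hA]
    have hc₁ : (elinStep b α xt rt t st).c (desig n t) =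
        (elinStep b' α xt rt t st').c (desig n t) := by
      rw [ec, ec', hc]
    refine ⟨hA₁, hc₁, ?_⟩
    -- write `μ = b_i * (μ / b_i)` and pull `b_i` out of the update
    rw [← mul_div_cancel₀ (st.lo _) hb.ne', ← mul_div_cancel₀ (st.hi _) hb.ne',
      intervalUpdate_mul hb] at ebounds
    rw [← mul_div_cancel₀ (st'.lo _) hb'.ne', ← mul_div_cancel₀ (st'.hi _) hb'.ne',
      intervalUpdate_mul hb', ← hlo, ← hhi, ← hA₁, ← hc₁] at ebounds'
    simp only [Prod.ext_iff, Prod.smul_fst, Prod.smul_snd, smul_eq_mul] at ebounds ebounds'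
    rw [ebounds.1, ebounds.2, ebounds'.1, ebounds'.2, mul_div_cancel_left₀ _ hb.ne',
      mul_div_cancel_left₀ _ hb.ne', mul_div_cancel_left₀ _ hb'.ne',
      mul_div_cancel_left₀ _ hb'.ne']
    exact ⟨rfl, rfl⟩
  · obtain ⟨eA, ec, elo, ehi⟩ := elinStep_of_ne_desig b α xt rt t st hji
    obtain ⟨eA', ec', elo', ehi'⟩ := elinStep_of_ne_desig b' α xt rt t st' hji
    rw [ELinState.AgreeNormalized, eA, ec, elo, ehi, eA', ec', elo', ehi']
    exact ⟨hA, hc, hlo, hhi⟩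

end Step

theorem elinRun_agreeNormalized [NeZero n] (α : ℝ) (x : ℕ → Fin d → ℝ)
    (r : ℕ → Fin n → Bool)
    {b b' : Fin n → ℝ} {i : Fin n} (hb : 0 < b i) (hb' : 0 < b' i) (t : ℕ)
    (hi : i ∈ (elinRun b α x r t).act) (hi' : i ∈ (elinRun b' α x r t).act) :
    (elinRun b α x r t).AgreeNormalized (elinRun b' α x r t) (b i) (b' i) i := by
  induction t with
  | zero => simp [ELinState.AgreeNormalized, elinRun, elinInit, hb.ne', hb'.ne']
  | succ t ih =>
    have hi₀ := elinStep_act_subset b α (x t) (r t) t _ hi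
    have hi₀' := elinStep_act_subset b' α (x t) (r t) t _ hi'
    exact elinStep_agreeNormalized b α (x t) (r t) t _ hb hb' hi₀ hi₀' (ih hi₀ hi₀')

theorem elinucb_s_normalized_bounds_bid_independent_general
    {n d : ℕ} [NeZero n] (α : ℝ)
    (x : ℕ → Fin d → ℝ)
    (r : ℕ → Fin n → Bool)
    (b b' : Fin n → ℝ)
    (hb : ∀ i, b i ∈ Set.Ioc (0 : ℝ) 1) (hb' : ∀ i, b' i ∈ Set.Ioc (0 : ℝ) 1)
    (t : ℕ) (i : Fin n)
    (hmem : i ∈ (elinRun b α x r t).act) (hmem' : i ∈ (elinRun b' α x r t).act) :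
    (elinRun b α x r t).lo i / b i = (elinRun b' α x r t).lo i / b' i ∧
    (elinRun b α x r t).hi i / b i = (elinRun b' α x r t).hi i / b' i :=
  (elinRun_agreeNormalized α x r (hb i).1 (hb' i).1 t hmem hmem').2.2

/-- **Claim 1.** For a fixed sequence of context arrivals and a fixed click realization,
for any two bid vectors `b`, `b'` and any round `t`, if agent `i` is in both active sets
`S_act(b, t)` and `S_act(b', t)`, then `μ_i^-(b,t)/b_i = μ_i^-(b',t)/b'_i` and
`μ_i^+(b,t)/b_i = μ_i^+(b',t)/b'_i`. -/
theorem elinucb_s_normalized_bounds_bid_independent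
    {n d : ℕ} [NeZero n] (α : ℝ) (hα : 0 < α)
    (x : ℕ → Fin d → ℝ) (hx : ∀ t j, x t j ∈ Set.Icc (0 : ℝ) 1)
    (r : ℕ → Fin n → Bool)
    (b b' : Fin n → ℝ)
    (hb : ∀ i, b i ∈ Set.Ioc (0 : ℝ) 1) (hb' : ∀ i, b' i ∈ Set.Ioc (0 : ℝ) 1)
    (t : ℕ) (i : Fin n)
    (hmem : i ∈ (elinRun b α x r t).act) (hmem' : i ∈ (elinRun b' α x r t).act) :
    (elinRun b α x r t).lo i / b i = (elinRun b' α x r t).lo i / b' i ∧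
    (elinRun b α x r t).hi i / b i = (elinRun b' α x r t).hi i / b' i :=
  elinucb_s_normalized_bounds_bid_independent_general α x r b b' hb hb' t i hmem hmem'
end

section
/- Under the allocation rule ELinUCB-S, fix a sequence of context arrivals and a click realization. Let b^+ and b be two bid vectors with b_i^+ ≥ b_i and b_j^+ = b_j for all j ≠ i. If for every round τ ∈ {1,…,T} agent i satisfies i ∈ S_act(b^+, τ) ∩ S_act(b, τ), then for all τ ∈ {1,…,T} the active sets satisfy S_act(b^+, τ) ⊆ S_act(b, τ). -/
/-!
ELinUCB-S (LinUCB-based allocation rule for single-slot SSA).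

The state of the algorithm consists of the active set `act`, the per-agent
matrices `A`, vectors `c`, and the lower/upper confidence bounds `lo`, `hi`.
`elinRun b α x r t` is the state at the beginning of round `t`
(i.e. after `t` completed rounds, rounds being numbered `0, 1, 2, …`),
when the bid vector is `b`, the learning parameter is `α`, the context
sequence is `x` and the click realization is `r` (where `r t i` tells whether
agent `i`'s ad would be clicked if displayed at round `t`).
-/

open Matrix
open scoped Classical

variable {n d : ℕ}

/-!
Couple the runs with bids `b` and `b⁺`. They see the same contexts and clicks, so an agent `j`
active in the `b⁺`-run has the same statistics `A_j, c_j` in both runs, and its confidence bounds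
in the `b⁺`-run are those of the `b`-run scaled by `b⁺_j / b_j ≥ 1`: the refinement of the bounds
is positively homogeneous in the bid. Hence an agent other than `i` that survives elimination in
the `b⁺`-run faces only larger lower bounds there, and so survives in the `b`-run as well. An agent
active only in the `b`-run has its upper bound, hence also its lower bound, below the lower bound
of some agent active in the `b⁺`-run, so it cannot eliminate anyone the `b⁺`-run keeps.
-/

namespace ELinState

section Refine

variable (l h γm γp : ℝ)

/-- The update `[l, h] ← [l, h] ∩ [γm, γp]` of a confidence interval, collapsed to the midpoint
when the intersection is empty and frozen once the interval is degenerate. -/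
noncomputable def refineLo : ℝ :=
  if l < h then if max l γm < min h γp then max l γm else (l + h) / 2 else l

noncomputable def refineHi : ℝ :=
  if l < h then if max l γm < min h γp then min h γp else (l + h) / 2 else h

theorem le_refineLo : l ≤ refineLo l h γm γp := by
  unfold refineLo
  split_ifs <;> first | exact le_max_left _ _ | linarith

theorem refineHi_le : refineHi l h γm γp ≤ h := by
  unfold refineHi
  split_ifs <;> first | exact min_le_left _ _ | linarith

variable {l h} in
theorem refineLo_le_refineHi (hlh : l ≤ h) : refineLo l h γm γp ≤ refineHi l h γm γp := by
  unfold refineLo refineHi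
  split_ifs with _ hne
  exacts [hne.le, le_rfl, hlh]

variable {c : ℝ}

theorem refineLo_mul (hc : 0 < c) :
    refineLo (c * l) (c * h) (c * γm) (c * γp) = c * refineLo l h γm γp := by
  simp only [refineLo, ← mul_max_of_nonneg _ _ hc.le, ← mul_min_of_nonneg _ _ hc.le,
    mul_lt_mul_iff_right₀ hc]
  split_ifs <;> ring

theorem refineHi_mul (hc : 0 < c) :
    refineHi (c * l) (c * h) (c * γm) (c * γp) = c * refineHi l h γm γp := by
  simp only [refineHi, ← mul_max_of_nonneg _ _ hc.le, ← mul_min_of_nonneg _ _ hc.le,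
    mul_lt_mul_iff_right₀ hc]
  split_ifs <;> ring

end Refine

noncomputable def explore (bj α : ℝ) (xt : Fin d → ℝ) (rt : Fin n → Bool) (j : Fin n)
    (st : ELinState n d) : ELinState n d :=
  let A' := st.A j + vecMulVec xt xt
  let c' := st.c j + (if rt j then (1 : ℝ) else 0) • xt
  let γm := bj * ((A'⁻¹ *ᵥ c') ⬝ᵥ xt - α * Real.sqrt (xt ⬝ᵥ (A'⁻¹ *ᵥ xt)))
  let γp := bj * ((A'⁻¹ *ᵥ c') ⬝ᵥ xt + α * Real.sqrt (xt ⬝ᵥ (A'⁻¹ *ᵥ xt)))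
  { act := st.act
    A := Function.update st.A j A'
    c := Function.update st.c j c'
    lo := Function.update st.lo j (refineLo (st.lo j) (st.hi j) γm γp)
    hi := Function.update st.hi j (refineHi (st.lo j) (st.hi j) γm γp) }

noncomputable def exploreRound [NeZero n] (b : Fin n → ℝ) (α : ℝ) (xt : Fin d → ℝ)
    (rt : Fin n → Bool) (t : ℕ) (st : ELinState n d) : ELinState n d :=
  if desig n t ∈ st.act then st.explore (b (desig n t)) α xt rt (desig n t) else st

noncomputable def eliminate (st : ELinState n d) : ELinState n d :=
  { st with act := st.act.filter (fun i => ∀ k ∈ st.act, st.lo k ≤ st.hi i) }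

theorem _root_.elinStep_eq_eliminate_exploreRound [NeZero n] (b : Fin n → ℝ) (α : ℝ)
    (xt : Fin d → ℝ) (rt : Fin n → Bool) (t : ℕ) (st : ELinState n d) :
    elinStep b α xt rt t st = (st.exploreRound b α xt rt t).eliminate :=
  rfl

theorem mem_eliminate {st : ELinState n d} {j : Fin n} :
    j ∈ st.eliminate.act ↔ j ∈ st.act ∧ ∀ k ∈ st.act, st.lo k ≤ st.hi j :=
  Finset.mem_filter

section ExploreOfNe

variable {bj α : ℝ} {xt : Fin d → ℝ} {rt : Fin n → Bool} {j q : Fin n} (st : ELinState n d)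

theorem explore_A_of_ne (hq : q ≠ j) : (st.explore bj α xt rt j).A q = st.A q :=
  Function.update_of_ne hq _ _

theorem explore_c_of_ne (hq : q ≠ j) : (st.explore bj α xt rt j).c q = st.c q :=
  Function.update_of_ne hq _ _

theorem explore_lo_of_ne (hq : q ≠ j) : (st.explore bj α xt rt j).lo q = st.lo q :=
  Function.update_of_ne hq _ _

theorem explore_hi_of_ne (hq : q ≠ j) : (st.explore bj α xt rt j).hi q = st.hi q :=
  Function.update_of_ne hq _ _

end ExploreOfNe

section ExploreRound

variable [NeZero n] (b : Fin n → ℝ) (α : ℝ) (xt : Fin d → ℝ) (rt : Fin n → Bool) (t : ℕ)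
  (st : ELinState n d)

@[simp]
theorem exploreRound_act : (st.exploreRound b α xt rt t).act = st.act := by
  unfold exploreRound; split_ifs <;> rfl

theorem lo_le_lo_exploreRound (q : Fin n) : st.lo q ≤ (st.exploreRound b α xt rt t).lo q := by
  unfold exploreRound
  split_ifs
  · rcases eq_or_ne q (desig n t) with rfl | hq
    · simpa [explore] using le_refineLo _ _ _ _
    · exact (st.explore_lo_of_ne hq).ge
  · exact le_rfl

theorem hi_exploreRound_le (q : Fin n) : (st.exploreRound b α xt rt t).hi q ≤ st.hi q := by
  unfold exploreRound
  split_ifs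
  · rcases eq_or_ne q (desig n t) with rfl | hq
    · simpa [explore] using refineHi_le _ _ _ _
    · exact (st.explore_hi_of_ne hq).le
  · exact le_rfl

end ExploreRound

def Valid (st : ELinState n d) : Prop :=
  ∀ k, 0 ≤ st.lo k ∧ st.lo k ≤ st.hi k

theorem Valid.exploreRound [NeZero n] {st : ELinState n d} (hst : st.Valid) (b : Fin n → ℝ)
    (α : ℝ) (xt : Fin d → ℝ) (rt : Fin n → Bool) (t : ℕ) :
    (st.exploreRound b α xt rt t).Valid := by
  intro k
  refine ⟨(hst k).1.trans (st.lo_le_lo_exploreRound b α xt rt t k), ?_⟩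
  unfold ELinState.exploreRound
  split_ifs
  · rcases eq_or_ne k (desig n t) with rfl | hk
    · simpa [explore] using refineLo_le_refineHi _ _ (hst _).2
    · rw [st.explore_lo_of_ne hk, st.explore_hi_of_ne hk]
      exact (hst k).2
  · exact (hst k).2

theorem exists_mem_eliminate_forall_lo_le {st : ELinState n d} (hst : st.Valid)
    (hne : st.act.Nonempty) : ∃ m ∈ st.eliminate.act, ∀ q ∈ st.act, st.lo q ≤ st.lo m := by
  obtain ⟨m, hm, hmax⟩ := st.act.exists_max_image st.lo hne
  exact ⟨m, mem_eliminate.mpr ⟨hm, fun q hq => (hmax q hq).trans (hst m).2⟩, hmax⟩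

end ELinState

open ELinState

theorem elinRun_valid [NeZero n] {b : Fin n → ℝ} (hb : ∀ j, 0 ≤ b j) (α : ℝ)
    (x : ℕ → Fin d → ℝ) (r : ℕ → Fin n → Bool) : ∀ t, (elinRun b α x r t).Valid
  | 0 => fun k => ⟨le_rfl, hb k⟩
  | t + 1 => (elinRun_valid hb α x r t).exploreRound b α (x t) (r t) t

structure ScaledAt (c : ℝ) (s' s : ELinState n d) (j : Fin n) : Prop where
  A_eq : s'.A j = s.A j
  c_eq : s'.c j = s.c j
  lo_eq : s'.lo j = c * s.lo j
  hi_eq : s'.hi j = c * s.hi j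

theorem ScaledAt.explore {c bj : ℝ} (hc : 0 < c) {s' s : ELinState n d} {j : Fin n}
    (h : ScaledAt c s' s j) (α : ℝ) (xt : Fin d → ℝ) (rt : Fin n → Bool) :
    ScaledAt c (s'.explore (c * bj) α xt rt j) (s.explore bj α xt rt j) j := by
  constructor <;>
    simp only [ELinState.explore, Function.update_self, h.A_eq, h.c_eq, h.lo_eq, h.hi_eq, mul_assoc]
  · exact refineLo_mul _ _ _ _ hc
  · exact refineHi_mul _ _ _ _ hc

theorem ScaledAt.exploreRound_of_ne [NeZero n] {c : ℝ} {s' s : ELinState n d} {j : Fin n}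
    (h : ScaledAt c s' s j) (b' b : Fin n → ℝ) (α : ℝ) (xt : Fin d → ℝ) (rt : Fin n → Bool)
    {t : ℕ} (ht : desig n t ≠ j) :
    ScaledAt c (s'.exploreRound b' α xt rt t) (s.exploreRound b α xt rt t) j := by
  unfold ELinState.exploreRound
  split_ifs <;> constructor <;>
    simp only [explore_A_of_ne _ ht.symm, explore_c_of_ne _ ht.symm, explore_lo_of_ne _ ht.symm,
      explore_hi_of_ne _ ht.symm, h.A_eq, h.c_eq, h.lo_eq, h.hi_eq]

/-- The invariant relating the state `s'` of the run with bids `b' = w * b` to the state `s` of the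
run with bids `b`. -/
structure Coupled (w : Fin n → ℝ) (s' s : ELinState n d) : Prop where
  act_subset : s'.act ⊆ s.act
  scaledAt : ∀ j ∈ s'.act, ScaledAt (w j) s' s j
  dominated : ∀ k ∈ s.act, k ∉ s'.act → ∃ m ∈ s'.act, s.hi k < s'.lo m

namespace Coupled

variable {w : Fin n → ℝ} {s' s : ELinState n d}

theorem elinInit {b' b : Fin n → ℝ} (hb' : ∀ j, b' j = w j * b j) :
    Coupled w (elinInit b' : ELinState n d) (elinInit b) where
  act_subset := subset_rfl
  scaledAt j _ := ⟨rfl, rfl, (mul_zero _).symm, hb' j⟩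
  dominated k _ hk := absurd (Finset.mem_univ k) hk

theorem exploreRound [NeZero n] (h : Coupled w s' s) (hw : ∀ j, 0 < w j) {b' b : Fin n → ℝ}
    (hb' : ∀ j, b' j = w j * b j) (α : ℝ) (xt : Fin d → ℝ) (rt : Fin n → Bool) (t : ℕ) :
    Coupled w (s'.exploreRound b' α xt rt t) (s.exploreRound b α xt rt t) where
  act_subset := by simpa using h.act_subset
  scaledAt j hj := by
    rw [exploreRound_act] at hj
    rcases eq_or_ne (desig n t) j with rfl | ht
    · simp only [ELinState.exploreRound, if_pos hj, if_pos (h.act_subset hj), hb']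
      exact (h.scaledAt _ hj).explore (hw _) α xt rt
    · exact (h.scaledAt j hj).exploreRound_of_ne b' b α xt rt ht
  dominated k hk hk' := by
    rw [exploreRound_act] at hk hk'
    obtain ⟨m, hm, hlt⟩ := h.dominated k hk hk'
    exact ⟨m, by simpa using hm, ((s.hi_exploreRound_le b α xt rt t k).trans_lt hlt).trans_le
      (s'.lo_le_lo_exploreRound b' α xt rt t m)⟩

theorem act_subset_eliminate (h : Coupled w s' s) (hw : ∀ j, 1 ≤ w j) (hv : s.Valid)
    (hraised : ∀ j, 1 < w j → j ∈ s.eliminate.act) : s'.eliminate.act ⊆ s.eliminate.act := by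
  intro j hj
  obtain ⟨hj', hjlo⟩ := mem_eliminate.mp hj
  rcases (hw j).lt_or_eq with hwj | hwj
  · exact hraised j hwj
  have hhi : s'.hi j = s.hi j := by rw [(h.scaledAt j hj').hi_eq, ← hwj, one_mul]
  refine mem_eliminate.mpr ⟨h.act_subset hj', fun k hk => ?_⟩
  by_cases hk' : k ∈ s'.act
  · calc s.lo k ≤ w k * s.lo k := le_mul_of_one_le_left (hv k).1 (hw k)
      _ = s'.lo k := (h.scaledAt k hk').lo_eq.symm
      _ ≤ s.hi j := hhi ▸ hjlo k hk'
  · obtain ⟨m, hm, hlt⟩ := h.dominated k hk hk'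
    exact (hv k).2.trans (hlt.le.trans (hhi ▸ hjlo m hm))

theorem eliminate (h : Coupled w s' s) (hw : ∀ j, 1 ≤ w j) (hv' : s'.Valid) (hv : s.Valid)
    (hraised : ∀ j, 1 < w j → j ∈ s.eliminate.act) : Coupled w s'.eliminate s.eliminate where
  act_subset := h.act_subset_eliminate hw hv hraised
  scaledAt j hj :=
    have hs := h.scaledAt j (mem_eliminate.mp hj).1
    ⟨hs.A_eq, hs.c_eq, hs.lo_eq, hs.hi_eq⟩
  dominated k hk hk' := by
    have hk1 : k ∈ s.act := (mem_eliminate.mp hk).1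
    obtain ⟨q, hq, hlt⟩ : ∃ q ∈ s'.act, s.hi k < s'.lo q := by
      by_cases hks : k ∈ s'.act
      · have : ¬∀ q ∈ s'.act, s'.lo q ≤ s'.hi k := fun hall => hk' (mem_eliminate.mpr ⟨hks, hall⟩)
        push Not at this
        obtain ⟨q, hq, hqk⟩ := this
        refine ⟨q, hq, lt_of_le_of_lt ?_ hqk⟩
        calc s.hi k ≤ w k * s.hi k := le_mul_of_one_le_left ((hv k).1.trans (hv k).2) (hw k)
          _ = s'.hi k := (h.scaledAt k hks).hi_eq.symm
      · exact h.dominated k hk1 hks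
    obtain ⟨m, hm, hmax⟩ := exists_mem_eliminate_forall_lo_le hv' ⟨q, hq⟩
    exact ⟨m, hm, hlt.trans_le (hmax q hq)⟩

end Coupled

theorem elinRun_act_subset_of_le [NeZero n] {b' b : Fin n → ℝ} (hb : ∀ j, 0 < b j)
    (hle : ∀ j, b j ≤ b' j) (α : ℝ) (x : ℕ → Fin d → ℝ) (r : ℕ → Fin n → Bool) (T : ℕ)
    (hraised : ∀ τ ≤ T, ∀ j, b j < b' j → j ∈ (elinRun b α x r τ).act) :
    ∀ τ ≤ T, (elinRun b' α x r τ).act ⊆ (elinRun b α x r τ).act := by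
  set w : Fin n → ℝ := fun j => b' j / b j
  have hw : ∀ j, 1 ≤ w j := fun j => (one_le_div (hb j)).mpr (hle j)
  have hb' : ∀ j, b' j = w j * b j := fun j => (div_mul_cancel₀ _ (hb j).ne').symm
  have hcoupled : ∀ τ ≤ T, Coupled w (elinRun b' α x r τ) (elinRun b α x r τ) := by
    intro τ hτ
    induction τ with
    | zero => exact Coupled.elinInit hb'
    | succ t ih =>
      have hv' := (elinRun_valid (fun j => (hle j).trans' (hb j).le) α x r t).exploreRound
        b' α (x t) (r t) t
      have hv := (elinRun_valid (fun j => (hb j).le) α x r t).exploreRound b α (x t) (r t) t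
      exact ((ih (by omega)).exploreRound (fun j => one_pos.trans_le (hw j)) hb' α (x t) (r t) t
        ).eliminate hw hv' hv fun j hj => hraised (t + 1) hτ j ((one_lt_div (hb j)).mp hj)
  exact fun τ hτ => (hcoupled τ hτ).act_subset

theorem elinucb_s_active_set_inclusion_general
    {n d : ℕ} [NeZero n] (α : ℝ)
    (x : ℕ → Fin d → ℝ)
    (r : ℕ → Fin n → Bool)
    (b : Fin n → ℝ) (hb : ∀ j, b j ∈ Set.Ioc (0 : ℝ) 1)
    (i : Fin n) (biplus : ℝ)
    (hge : b i ≤ biplus)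
    (T : ℕ)
    (hactive : ∀ τ ≤ T,
      i ∈ (elinRun (Function.update b i biplus) α x r τ).act ∧
      i ∈ (elinRun b α x r τ).act) :
    ∀ τ ≤ T,
      (elinRun (Function.update b i biplus) α x r τ).act ⊆ (elinRun b α x r τ).act := by
  have hne : ∀ j ≠ i, Function.update b i biplus j = b j := fun j hj => Function.update_of_ne hj _ _
  refine elinRun_act_subset_of_le (fun j => (hb j).1) (fun j => ?_) α x r T fun τ hτ j hj => ?_
  · rcases eq_or_ne j i with rfl | hj
    · simpa using hge
    · exact (hne j hj).ge
  · obtain rfl : j = i := by_contra fun hji => hj.ne (hne j hji).symm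
    exact (hactive τ hτ).2

/-- **Claim 3.** Fix context arrivals and a click realization. Let `b⁺` and `b` be two
bid vectors with `b_i⁺ ≥ b_i` and `b_j⁺ = b_j` for all `j ≠ i` (formalized as
`b⁺ = Function.update b i biplus` with `b i ≤ biplus`). If for every round `τ ≤ T`
agent `i` belongs to `S_act(b⁺, τ) ∩ S_act(b, τ)`, then for all `τ ≤ T`
we have `S_act(b⁺, τ) ⊆ S_act(b, τ)`. -/
theorem elinucb_s_active_set_inclusion
    {n d : ℕ} [NeZero n] (α : ℝ) (hα : 0 < α)
    (x : ℕ → Fin d → ℝ) (hx : ∀ t j, x t j ∈ Set.Icc (0 : ℝ) 1)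
    (r : ℕ → Fin n → Bool)
    (b : Fin n → ℝ) (hb : ∀ j, b j ∈ Set.Ioc (0 : ℝ) 1)
    (i : Fin n) (biplus : ℝ) (hbp : biplus ∈ Set.Ioc (0 : ℝ) 1)
    (hge : b i ≤ biplus)
    (T : ℕ)
    (hactive : ∀ τ ≤ T,
      i ∈ (elinRun (Function.update b i biplus) α x r τ).act ∧
      i ∈ (elinRun b α x r τ).act) :
    ∀ τ ≤ T,
      (elinRun (Function.update b i biplus) α x r τ).act ⊆ (elinRun b α x r τ).act :=
  elinucb_s_active_set_inclusion_general α x r b hb i biplus hge T hactive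
end

section
/- Under the allocation rule ELinUCB-S, fix a sequence of context arrivals, a click realization, and the bids b_{-i} of all agents other than i. Let b = (b_i, b_{-i}) and b^+ = (b_i^+, b_{-i}) with b_i^+ > b_i. Then for every round t, if agent i ∈ S_act(b, t), then agent i ∈ S_act(b^+, t); i.e., raising one's own bid can only keep an agent in the active set longer. -/
/-!
ELinUCB-S (LinUCB-based allocation rule for single-slot SSA).

The state of the algorithm consists of the active set `act`, the per-agent
matrices `A`, vectors `c`, and the lower/upper confidence bounds `lo`, `hi`.
`elinRun b α x r t` is the state at the beginning of round `t`
(i.e. after `t` completed rounds, rounds being numbered `0, 1, 2, …`),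
when the bid vector is `b`, the learning parameter is `α`, the context
sequence is `x` and the click realization is `r` (where `r t i` tells whether
agent `i`'s ad would be clicked if displayed at round `t`).
-/

open Matrix
open scoped Classical

variable {n d : ℕ}

/-!
Write `ρ = b⁺ᵢ / bᵢ ≥ 1`. The confidence-interval update commutes with scaling all its inputs
by `ρ > 0`, and agent `i`'s candidate bounds `γ∓` are `bᵢ` times a bid-free quantity. Hence, as
long as `i` is active in the `b`-run, the two runs are coupled: `i`'s interval in the `b⁺`-run is
`ρ` times its interval in the `b`-run, every other agent active in the `b⁺`-run carries the same
data in both runs, and every agent active in the `b`-run but already eliminated in the `b⁺`-run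
has an upper bound below `i`'s lower bound in the `b⁺`-run. Comparing the two elimination steps
shows that the coupling persists, that the `b⁺`-run's active set stays inside the `b`-run's,
and that `i` survives in the `b⁺`-run whenever it survives in the `b`-run.
-/

section Survivors

variable {ι : Type*}

noncomputable def survivors (S : Finset ι) (lo hi : ι → ℝ) : Finset ι :=
  S.filter fun k => ∀ m ∈ S, lo m ≤ hi k

variable {S S' : Finset ι} {lo hi lo' hi' : ι → ℝ} {i : ι}

theorem mem_survivors {k : ι} : k ∈ survivors S lo hi ↔ k ∈ S ∧ ∀ m ∈ S, lo m ≤ hi k :=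
  Finset.mem_filter

theorem survivors_subset : survivors S lo hi ⊆ S :=
  Finset.filter_subset _ _

theorem mem_survivors_of_mem_survivors (hS : S' ⊆ S) (hmem : i ∈ S')
    (hlo : ∀ m ∈ S', m ≠ i → lo' m = lo m) (hhi : hi i ≤ hi' i) (hself : lo' i ≤ hi' i)
    (hsurv : i ∈ survivors S lo hi) : i ∈ survivors S' lo' hi' := by
  refine mem_survivors.2 ⟨hmem, fun m hm => ?_⟩
  by_cases hmi : m = i
  · exact hmi ▸ hself
  · rw [hlo m hm hmi]
    exact ((mem_survivors.1 hsurv).2 m (hS hm)).trans hhi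

theorem survivors_subset_survivors (hS : S' ⊆ S) (hmem : i ∈ S')
    (hlo : ∀ m ∈ S', lo m ≤ lo' m) (hhi : ∀ k ∈ S', k ≠ i → hi' k = hi k)
    (hdrop : ∀ m ∈ S, m ∉ S' → lo m < lo' i) (hsurv : i ∈ survivors S lo hi) :
    survivors S' lo' hi' ⊆ survivors S lo hi := by
  intro k hk
  obtain ⟨hkS', hk⟩ := mem_survivors.1 hk
  by_cases hki : k = i
  · exact hki ▸ hsurv
  refine mem_survivors.2 ⟨hS hkS', fun m hm => ?_⟩
  rw [← hhi k hkS' hki]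
  by_cases hmS' : m ∈ S'
  · exact (hlo m hmS').trans (hk m hmS')
  · exact ((hdrop m hm hmS').trans_le (hk i hmem)).le

theorem hi_lt_of_mem_survivors_sdiff (hS : S' ⊆ S) (hlo : ∀ m ∈ S', m ≠ i → lo' m = lo m)
    (hhi : ∀ k ∈ S', hi k ≤ hi' k) (hdrop : ∀ k ∈ S, k ∉ S' → hi k < lo' i) {k : ι}
    (hk : k ∈ survivors S lo hi) (hk' : k ∉ survivors S' lo' hi') : hi k < lo' i := by
  obtain ⟨hkS, hk⟩ := mem_survivors.1 hk
  by_cases hkS' : k ∈ S'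
  · obtain ⟨m, hm, hlt⟩ : ∃ m ∈ S', hi' k < lo' m := by
      simpa [mem_survivors, hkS'] using hk'
    by_cases hmi : m = i
    · exact hmi ▸ (hhi k hkS').trans_lt hlt
    · rw [hlo m hm hmi] at hlt
      exact absurd (hk m (hS hm)) ((hhi k hkS').trans_lt hlt).not_ge
  · exact hdrop k hkS hkS'

end Survivors

structure ELinAgent (d : ℕ) where
  A : Matrix (Fin d) (Fin d) ℝ
  c : Fin d → ℝ
  lo : ℝ
  hi : ℝ

namespace ELinAgent

variable {d : ℕ}

noncomputable def narrow (L H γm γp : ℝ) : ℝ × ℝ :=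
  if L < H then
    if max L γm < min H γp then (max L γm, min H γp) else ((L + H) / 2, (L + H) / 2)
  else (L, H)

theorem narrow_fst (L H γm γp : ℝ) : (narrow L H γm γp).1 =
    if L < H then (if max L γm < min H γp then max L γm else (L + H) / 2) else L := by
  unfold narrow
  split_ifs <;> rfl

theorem narrow_snd (L H γm γp : ℝ) : (narrow L H γm γp).2 =
    if L < H then (if max L γm < min H γp then min H γp else (L + H) / 2) else H := by
  unfold narrow
  split_ifs <;> rfl

theorem narrow_mul {ρ : ℝ} (hρ : 0 < ρ) (L H γm γp : ℝ) :
    narrow (ρ * L) (ρ * H) (ρ * γm) (ρ * γp) = ρ • narrow L H γm γp := by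
  unfold narrow
  simp only [← mul_max_of_nonneg _ _ hρ.le, ← mul_min_of_nonneg _ _ hρ.le,
    mul_lt_mul_iff_right₀ hρ]
  split_ifs <;> ext <;> simp only [Prod.smul_fst, Prod.smul_snd, smul_eq_mul] <;> ring

theorem le_narrow_fst (L H γm γp : ℝ) : L ≤ (narrow L H γm γp).1 := by
  unfold narrow
  split_ifs with h
  · exact le_max_left _ _
  · linarith
  · exact le_rfl

theorem narrow_snd_le (L H γm γp : ℝ) : (narrow L H γm γp).2 ≤ H := by
  unfold narrow
  split_ifs with h
  · exact min_le_left _ _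
  · linarith
  · exact le_rfl

theorem narrow_fst_le_snd {L H : ℝ} (h : L ≤ H) (γm γp : ℝ) :
    (narrow L H γm γp).1 ≤ (narrow L H γm γp).2 := by
  unfold narrow
  split_ifs with _ hlt
  · exact hlt.le
  · exact le_rfl
  · exact h

noncomputable def explore (β α : ℝ) (xt : Fin d → ℝ) (click : Bool) (s : ELinAgent d) :
    ELinAgent d :=
  let A := s.A + vecMulVec xt xt
  let c := s.c + (if click then (1 : ℝ) else 0) • xt
  let θx := (A⁻¹ *ᵥ c) ⬝ᵥ xt
  let w := α * Real.sqrt (xt ⬝ᵥ (A⁻¹ *ᵥ xt))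
  ⟨A, c, (narrow s.lo s.hi (β * (θx - w)) (β * (θx + w))).1,
    (narrow s.lo s.hi (β * (θx - w)) (β * (θx + w))).2⟩

def scaleBounds (ρ : ℝ) (s : ELinAgent d) : ELinAgent d :=
  ⟨s.A, s.c, ρ * s.lo, ρ * s.hi⟩

variable {β α : ℝ} {xt : Fin d → ℝ} {click : Bool} {s : ELinAgent d}

theorem le_explore_lo : s.lo ≤ (s.explore β α xt click).lo :=
  le_narrow_fst _ _ _ _

theorem explore_hi_le : (s.explore β α xt click).hi ≤ s.hi :=
  narrow_snd_le _ _ _ _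

theorem explore_lo_le_hi (h : s.lo ≤ s.hi) :
    (s.explore β α xt click).lo ≤ (s.explore β α xt click).hi :=
  narrow_fst_le_snd h _ _

theorem explore_scaleBounds {ρ : ℝ} (hρ : 0 < ρ) :
    (s.scaleBounds ρ).explore (ρ * β) α xt click = (s.explore β α xt click).scaleBounds ρ := by
  simp only [explore, scaleBounds, mul_assoc, narrow_mul hρ, Prod.smul_fst, Prod.smul_snd,
    smul_eq_mul]

end ELinAgent

namespace ELinState

variable {n d : ℕ}

def agent (st : ELinState n d) (k : Fin n) : ELinAgent d :=
  ⟨st.A k, st.c k, st.lo k, st.hi k⟩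

noncomputable def exploredAgent [NeZero n] (b : Fin n → ℝ) (α : ℝ) (xt : Fin d → ℝ)
    (rt : Fin n → Bool) (t : ℕ) (st : ELinState n d) (k : Fin n) : ELinAgent d :=
  if desig n t = k ∧ k ∈ st.act then (st.agent k).explore (b k) α xt (rt k) else st.agent k

variable [NeZero n] {b b' : Fin n → ℝ} {α : ℝ} {xt : Fin d → ℝ} {rt : Fin n → Bool} {t : ℕ}
  {st st' : ELinState n d} {k : Fin n}

theorem agent_elinStep : (elinStep b α xt rt t st).agent k = st.exploredAgent b α xt rt t k := by
  unfold elinStep exploredAgent agent ELinAgent.explore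
  by_cases hj : desig n t ∈ st.act
  · by_cases hk : desig n t = k
    · subst hk
      simp [hj, ELinAgent.narrow_fst, ELinAgent.narrow_snd]
    · simp [hj, hk, Function.update_of_ne (Ne.symm hk)]
  · have hk : ¬(desig n t = k ∧ k ∈ st.act) := fun h => hj (h.1 ▸ h.2)
    simp [hj, hk]

theorem lo_elinStep : (elinStep b α xt rt t st).lo k = (st.exploredAgent b α xt rt t k).lo :=
  congrArg ELinAgent.lo agent_elinStep

theorem hi_elinStep : (elinStep b α xt rt t st).hi k = (st.exploredAgent b α xt rt t k).hi :=
  congrArg ELinAgent.hi agent_elinStep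

theorem act_elinStep : (elinStep b α xt rt t st).act =
    survivors st.act (fun k => (st.exploredAgent b α xt rt t k).lo)
      (fun k => (st.exploredAgent b α xt rt t k).hi) := by
  have hsurv : (elinStep b α xt rt t st).act =
      survivors st.act (elinStep b α xt rt t st).lo (elinStep b α xt rt t st).hi := by
    unfold elinStep survivors
    dsimp only
    split <;> rfl
  rw [hsurv]
  congr 1 <;> funext m
  · exact lo_elinStep
  · exact hi_elinStep

theorem le_exploredAgent_lo : st.lo k ≤ (st.exploredAgent b α xt rt t k).lo := by
  unfold exploredAgent
  split_ifs
  · exact ELinAgent.le_explore_lo (s := st.agent k)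
  · exact le_rfl

theorem exploredAgent_hi_le : (st.exploredAgent b α xt rt t k).hi ≤ st.hi k := by
  unfold exploredAgent
  split_ifs
  · exact ELinAgent.explore_hi_le (s := st.agent k)
  · exact le_rfl

theorem exploredAgent_lo_le_hi (h : st.lo k ≤ st.hi k) :
    (st.exploredAgent b α xt rt t k).lo ≤ (st.exploredAgent b α xt rt t k).hi := by
  unfold exploredAgent
  split_ifs
  · exact ELinAgent.explore_lo_le_hi (s := st.agent k) h
  · exact h

theorem exploredAgent_congr (hmem : k ∈ st'.act ↔ k ∈ st.act) (hb : b' k = b k)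
    (h : st'.agent k = st.agent k) :
    st'.exploredAgent b' α xt rt t k = st.exploredAgent b α xt rt t k := by
  simp only [exploredAgent, hmem, hb, h]

theorem exploredAgent_scaleBounds {ρ : ℝ} (hρ : 0 < ρ) (hmem : k ∈ st'.act ↔ k ∈ st.act)
    (hb : b' k = ρ * b k) (h : st'.agent k = (st.agent k).scaleBounds ρ) :
    st'.exploredAgent b' α xt rt t k = (st.exploredAgent b α xt rt t k).scaleBounds ρ := by
  simp only [exploredAgent, hmem, hb, h]
  split_ifs
  · exact ELinAgent.explore_scaleBounds hρ
  · rfl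

/-- `st` is a state of the run with bids `b`, `st'` the state at the same round of the run in which
agent `i`'s bid is multiplied by `ρ`. -/
structure BidRaiseCoupling (ρ : ℝ) (i : Fin n) (st st' : ELinState n d) : Prop where
  mem : i ∈ st'.act
  act_subset : st'.act ⊆ st.act
  agent_self : st'.agent i = (st.agent i).scaleBounds ρ
  agent_of_ne : ∀ k ∈ st'.act, k ≠ i → st'.agent k = st.agent k
  hi_lt_of_dropped : ∀ k ∈ st.act, k ∉ st'.act → st.hi k < st'.lo i

theorem BidRaiseCoupling.elinStep {ρ : ℝ} {i : Fin n} (hc : BidRaiseCoupling ρ i st st')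
    (hρ : 1 ≤ ρ) (hbi : b' i = ρ * b i) (hbk : ∀ k ≠ i, b' k = b k)
    (hlo : 0 ≤ st.lo i) (hvalid : ∀ k ∈ st.act, st.lo k ≤ st.hi k)
    (hsurv : i ∈ (elinStep b α xt rt t st).act) :
    BidRaiseCoupling ρ i (elinStep b α xt rt t st) (elinStep b' α xt rt t st') := by
  set P := st.exploredAgent b α xt rt t
  set P' := st'.exploredAgent b' α xt rt t
  have hself : P' i = (P i).scaleBounds ρ := exploredAgent_scaleBounds (by linarith)
    (iff_of_true hc.mem (hc.act_subset hc.mem)) hbi hc.agent_self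
  have hother : ∀ k ∈ st'.act, k ≠ i → P' k = P k := fun k hk hki =>
    exploredAgent_congr (iff_of_true hk (hc.act_subset hk)) (hbk k hki) (hc.agent_of_ne k hk hki)
  have hPlo : 0 ≤ (P i).lo := hlo.trans le_exploredAgent_lo
  have hPi : (P i).lo ≤ (P i).hi := exploredAgent_lo_le_hi (hvalid i (hc.act_subset hc.mem))
  have hlo_eq : ∀ k ∈ st'.act, k ≠ i → (P' k).lo = (P k).lo := fun k hk hki =>
    congrArg ELinAgent.lo (hother k hk hki)
  have hhi_eq : ∀ k ∈ st'.act, k ≠ i → (P' k).hi = (P k).hi := fun k hk hki =>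
    congrArg ELinAgent.hi (hother k hk hki)
  have hP'i : (P' i).lo ≤ (P' i).hi := hself ▸ mul_le_mul_of_nonneg_left hPi (by linarith)
  have hlo_le : ∀ k ∈ st'.act, (P k).lo ≤ (P' k).lo := by
    intro k hk
    by_cases hki : k = i
    · subst hki
      exact hself ▸ le_mul_of_one_le_left hPlo hρ
    · rw [hother k hk hki]
  have hhi_le : ∀ k ∈ st'.act, (P k).hi ≤ (P' k).hi := by
    intro k hk
    by_cases hki : k = i
    · subst hki
      exact hself ▸ le_mul_of_one_le_left (hPlo.trans hPi) hρ
    · rw [hother k hk hki]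
  have hdrop : ∀ k ∈ st.act, k ∉ st'.act → (P k).hi < (P' i).lo := fun k hk hk' =>
    exploredAgent_hi_le.trans_lt ((hc.hi_lt_of_dropped k hk hk').trans_le le_exploredAgent_lo)
  rw [act_elinStep] at hsurv
  refine ⟨?_, ?_, ?_, ?_, ?_⟩
  · rw [act_elinStep]
    exact mem_survivors_of_mem_survivors hc.act_subset hc.mem hlo_eq (hhi_le i hc.mem) hP'i
      hsurv
  · rw [act_elinStep, act_elinStep]
    exact survivors_subset_survivors hc.act_subset hc.mem hlo_le hhi_eq
      (fun m hm hm' => (exploredAgent_lo_le_hi (hvalid m hm)).trans_lt (hdrop m hm hm')) hsurv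
  · rw [agent_elinStep, agent_elinStep]
    exact hself
  · intro k hk hki
    rw [act_elinStep] at hk
    rw [agent_elinStep, agent_elinStep]
    exact hother k (survivors_subset hk) hki
  · intro k hk hk'
    rw [act_elinStep] at hk hk'
    rw [hi_elinStep, lo_elinStep]
    exact hi_lt_of_mem_survivors_sdiff hc.act_subset hlo_eq hhi_le hdrop hk hk'

end ELinState

section Run

variable {n d : ℕ} [NeZero n] {b : Fin n → ℝ} {α : ℝ} {x : ℕ → Fin d → ℝ} {r : ℕ → Fin n → Bool}

theorem elinRun_succ (t : ℕ) :
    elinRun b α x r (t + 1) = elinStep b α (x t) (r t) t (elinRun b α x r t) :=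
  rfl

theorem elinRun_lo_nonneg (t : ℕ) (k : Fin n) : 0 ≤ (elinRun b α x r t).lo k := by
  induction t with
  | zero => exact le_rfl
  | succ t ih =>
    rw [elinRun_succ, ELinState.lo_elinStep]
    exact ih.trans ELinState.le_exploredAgent_lo

theorem elinRun_lo_le_hi (hb : ∀ k, 0 ≤ b k) (t : ℕ) (k : Fin n) :
    (elinRun b α x r t).lo k ≤ (elinRun b α x r t).hi k := by
  induction t with
  | zero => exact hb k
  | succ t ih =>
    rw [elinRun_succ, ELinState.lo_elinStep, ELinState.hi_elinStep]
    exact ELinState.exploredAgent_lo_le_hi ih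

end Run

section Coupling

variable {n d : ℕ} {b b' : Fin n → ℝ} {ρ : ℝ} {i : Fin n}

theorem bidRaiseCoupling_elinInit (hbi : b' i = ρ * b i) (hbk : ∀ k ≠ i, b' k = b k) :
    ELinState.BidRaiseCoupling ρ i (elinInit b : ELinState n d) (elinInit b') where
  mem := Finset.mem_univ i
  act_subset := Finset.subset_univ _
  agent_self := by simp [ELinState.agent, ELinAgent.scaleBounds, elinInit, hbi]
  agent_of_ne k _ hki := by simp [ELinState.agent, elinInit, hbk k hki]
  hi_lt_of_dropped k _ hk := absurd (Finset.mem_univ k) hk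

theorem bidRaiseCoupling_elinRun [NeZero n] {α : ℝ} {x : ℕ → Fin d → ℝ} {r : ℕ → Fin n → Bool}
    (hρ : 1 ≤ ρ) (hbi : b' i = ρ * b i) (hbk : ∀ k ≠ i, b' k = b k) (hb : ∀ k, 0 ≤ b k) :
    ∀ t, i ∈ (elinRun b α x r t).act →
      ELinState.BidRaiseCoupling ρ i (elinRun b α x r t) (elinRun b' α x r t)
  | 0, _ => bidRaiseCoupling_elinInit hbi hbk
  | t + 1, h => by
    have hprev : i ∈ (elinRun b α x r t).act := by
      rw [elinRun_succ, ELinState.act_elinStep] at h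
      exact survivors_subset h
    exact (bidRaiseCoupling_elinRun hρ hbi hbk hb t hprev).elinStep hρ hbi hbk
      (elinRun_lo_nonneg t i) (fun k _ => elinRun_lo_le_hi hb t k) h

end Coupling

theorem elinucb_s_higher_bid_stays_active_general
    {n d : ℕ} [NeZero n] (α : ℝ)
    (x : ℕ → Fin d → ℝ)
    (r : ℕ → Fin n → Bool)
    (b : Fin n → ℝ) (hb : ∀ j, b j ∈ Set.Ioc (0 : ℝ) 1)
    (i : Fin n) (biplus : ℝ)
    (hgt : b i < biplus) :
    ∀ t : ℕ, i ∈ (elinRun b α x r t).act →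
      i ∈ (elinRun (Function.update b i biplus) α x r t).act := by
  have hbi : 0 < b i := (hb i).1
  intro t ht
  refine (bidRaiseCoupling_elinRun (ρ := biplus / b i) ?_ ?_ ?_ (fun k => (hb k).1.le) t ht).mem
  · exact (one_le_div hbi).2 hgt.le
  · rw [Function.update_self, div_mul_cancel₀ _ hbi.ne']
  · exact fun k hk => Function.update_of_ne hk _ _

/-- **Claim 4.** Fix context arrivals, a click realization, and the bids `b_{-i}` of all
agents other than `i`. Let `b = (b_i, b_{-i})` and `b⁺ = (b_i⁺, b_{-i})` with `b_i⁺ > b_i`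
(formalized as `b⁺ = Function.update b i biplus` with `b i < biplus`). Then for every
round `t`, if `i ∈ S_act(b, t)` then `i ∈ S_act(b⁺, t)`: raising one's own bid can only
keep an agent in the active set longer. -/
theorem elinucb_s_higher_bid_stays_active
    {n d : ℕ} [NeZero n] (α : ℝ) (hα : 0 < α)
    (x : ℕ → Fin d → ℝ) (hx : ∀ t j, x t j ∈ Set.Icc (0 : ℝ) 1)
    (r : ℕ → Fin n → Bool)
    (b : Fin n → ℝ) (hb : ∀ j, b j ∈ Set.Ioc (0 : ℝ) 1)
    (i : Fin n) (biplus : ℝ) (hbp : biplus ∈ Set.Ioc (0 : ℝ) 1)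
    (hgt : b i < biplus) :
    ∀ t : ℕ, i ∈ (elinRun b α x r t).act →
      i ∈ (elinRun (Function.update b i biplus) α x r t).act :=
  elinucb_s_higher_bid_stays_active_general α x r b hb i biplus hgt
end

section
/- Let A be an ex-post monotone allocation rule. Applying the self-resampling transformation with parameter δ ∈ (0,1) to A — i.e., running A on the modified bids y_i = η_i b_i and charging the payments p_{i,t} = b_i·1{I_t = i} if η_i = 1 and p_{i,t} = b_i·1{I_t = i}·(1 − 1/δ) if η_i < 1 — yields a mechanism M that is ex-post incentive compatible (EPIC) and ex-post individually rational (EPIR). -/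
/-!
Fix an agent `i`, the other agents' randomness, hence their modified bids. The number of clicks
`N z` agent `i` receives when its own modified bid is `z` is then monotone in `z`. Bidding `c`
with value `v`, the agent's expected utility over its own coin is
`(1 - δ) N(c) (v - c) + (δ v + (1 - δ) c) H(c)`, where `H(c) = E[N(ε^{1/(1-δ)} c)]`.
Substituting `u = ε c^{1-δ}` gives `H(c) = L(c^{1-δ}) / c^{1-δ}`, where `L` is the primitive of
the monotone function `u ↦ N(u^{1/(1-δ)})`. Thus `L` is convex with subgradient `N(c)` at
`c^{1-δ}`; together with the weighted AM-GM inequality `v^δ c^{1-δ} ≤ δ v + (1 - δ) c` this shows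
that the utility is largest at `c = v`. Individual rationality holds pointwise: a truthful agent
pays its value when its bid is kept and a non-positive amount when it is resampled.
-/

open MeasureTheory Matrix
open scoped Classical

/-- The distribution of the mechanism's internal randomness: for each agent an
independent pair of independent uniform-`[0,1]` random variables. -/
noncomputable def resampMeasure (n : ℕ) : Measure (Fin n → ℝ × ℝ) :=
  Measure.pi fun _ =>
    (volume.restrict (Set.Icc (0 : ℝ) 1)).prod (volume.restrict (Set.Icc (0 : ℝ) 1))

/-- The multipliers `η_i` of the self-resampling procedure with parameter `δ`:
`η_i = 1` with probability `1 - δ`, and otherwise `η_i = ε_i^{1/(1-δ)}` with `ε_i`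
uniform on `[0,1]`. -/
noncomputable def etaOf {n : ℕ} (δ : ℝ) (ω : Fin n → ℝ × ℝ) (i : Fin n) : ℝ :=
  if (ω i).1 ≤ 1 - δ then 1 else ((ω i).2) ^ ((1 : ℝ) / (1 - δ))

/-- The (realized) utility of agent `i` with true per-click value `vi` at round `t`,
when the reported bid vector is `bid`, the clicks realization is `ρ`, and the
mechanism runs the allocation rule `Alloc` on the modified bids `y_k = η_k · bid_k`,
charging `p_{i,t} = bid_i · 1{I_t = i}` if `η_i = 1` and
`p_{i,t} = bid_i · 1{I_t = i} · (1 - 1/δ)` if `η_i < 1`. -/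
noncomputable def mechUtil {n : ℕ}
    (Alloc : (Fin n → ℝ) → ℕ → Fin n) (ρ : ℕ → Fin n → Bool) (δ : ℝ)
    (bid : Fin n → ℝ) (i : Fin n) (vi : ℝ) (t : ℕ) (ω : Fin n → ℝ × ℝ) : ℝ :=
  let η := etaOf δ ω
  let y : Fin n → ℝ := fun k => η k * bid k
  (if Alloc y t = i then (1 : ℝ) else 0) * (if ρ t i then (1 : ℝ) else 0) *
    (vi - bid i * (if Alloc y t = i then (1 : ℝ) else 0) *
      (if η i = 1 then 1 else 1 - 1 / δ))

open Set Function

theorem MonotoneOn.mul_sub_le_intervalIntegral {M : ℝ → ℝ} {a b : ℝ}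
    (hM : MonotoneOn M (uIcc a b)) : M a * (b - a) ≤ ∫ u in a..b, M u := by
  have hint := hM.intervalIntegrable (μ := volume)
  rcases le_total a b with hab | hba
  · rw [uIcc_of_le hab] at hM
    calc M a * (b - a) = ∫ _ in a..b, M a := by simp [mul_comm]
      _ ≤ ∫ u in a..b, M u := intervalIntegral.integral_mono_on hab intervalIntegrable_const hint
          fun u hu => hM ⟨le_rfl, hab⟩ hu hu.1
  · rw [uIcc_of_ge hba] at hM
    have : ∫ u in b..a, M u ≤ ∫ _ in b..a, M a :=
      intervalIntegral.integral_mono_on hba hint.symm intervalIntegrable_const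
        fun u hu => hM hu ⟨hba, le_rfl⟩ hu.2
    simp only [intervalIntegral.integral_const, smul_eq_mul] at this
    rw [intervalIntegral.integral_symm]
    linarith

theorem MonotoneOn.intervalIntegral_add_mul_sub_le {M : ℝ → ℝ} {s : Set ℝ} (hM : MonotoneOn M s)
    (hs : s.OrdConnected) {a b c : ℝ} (ha : a ∈ s) (hb : b ∈ s) (hc : c ∈ s) :
    (∫ u in a..b, M u) + M b * (c - b) ≤ ∫ u in a..c, M u := by
  have hint : ∀ {x y}, x ∈ s → y ∈ s → IntervalIntegrable M volume x y := fun hx hy =>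
    (hM.mono (hs.uIcc_subset hx hy)).intervalIntegrable
  have := (hM.mono (hs.uIcc_subset hb hc)).mul_sub_le_intervalIntegral
  rw [← intervalIntegral.integral_interval_sub_left (hint ha hc) (hint ha hb)] at this
  linarith

theorem utility_le_of_subgradient {δ v c m Lc Lv : ℝ} (hδ₀ : 0 < δ) (hδ₁ : δ ≤ 1)
    (hv : 0 ≤ v) (hc : 0 < c) (hLc : Lc ≤ m * c ^ (1 - δ))
    (hsub : Lc + m * (v ^ (1 - δ) - c ^ (1 - δ)) ≤ Lv) :
    (1 - δ) * (m * (v - c)) + (δ * v + (1 - δ) * c) * ((c ^ (1 - δ))⁻¹ * Lc) ≤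
      v * ((v ^ (1 - δ))⁻¹ * Lv) := by
  set β := c ^ (1 - δ)
  set S := δ * v + (1 - δ) * c
  have hβ : 0 < β := Real.rpow_pos_of_pos hc _
  have hamgm : v ^ δ * β ≤ S :=
    Real.geom_mean_le_arith_mean2_weighted hδ₀.le (by linarith) hv hc.le (by ring)
  have hvν : v ^ δ * v ^ (1 - δ) = v := by
    rw [← Real.rpow_add' hv (by norm_num), add_sub_cancel, Real.rpow_one]
  have hvν' : v * (v ^ (1 - δ))⁻¹ = v ^ δ := by
    rcases hv.eq_or_lt with rfl | hv
    · simp [Real.zero_rpow hδ₀.ne']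
    · nth_rewrite 1 [← hvν]
      rw [mul_inv_cancel_right₀ (Real.rpow_pos_of_pos hv _).ne']
  refine le_of_mul_le_mul_left ?_ hβ
  calc β * ((1 - δ) * (m * (v - c)) + S * (β⁻¹ * Lc))
      = (1 - δ) * m * (v - c) * β + v ^ δ * β * Lc + (S - v ^ δ * β) * Lc := by
        field_simp; ring
    _ ≤ (1 - δ) * m * (v - c) * β + v ^ δ * β * Lc + (S - v ^ δ * β) * (m * β) := by
        gcongr
    _ = v ^ δ * β * (Lc + m * (v ^ (1 - δ) - β)) := by
        linear_combination (-(m * β)) * hvν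
    _ ≤ v ^ δ * β * Lv := by gcongr
    _ = β * (v * ((v ^ (1 - δ))⁻¹ * Lv)) := by rw [← mul_assoc v, hvν']; ring

section UpdateCoordinate

variable {ι : Type*} [Fintype ι] [DecidableEq ι] {α : ι → Type*} [∀ i, MeasurableSpace (α i)]
  (μ : ∀ i, Measure (α i)) [∀ i, IsProbabilityMeasure (μ i)]

theorem measurePreserving_update (i : ι) :
    MeasurePreserving (fun q : (∀ j, α j) × α i => update q.1 i q.2)
      ((Measure.pi μ).prod (μ i)) (Measure.pi μ) := by
  refine ⟨measurable_update', (Measure.pi_eq fun s hs => ?_).symm⟩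
  have hpre : (fun q : (∀ j, α j) × α i => update q.1 i q.2) ⁻¹' univ.pi s =
      univ.pi (update s i univ) ×ˢ s i := by
    ext ⟨x, y⟩
    simp only [mem_preimage, mem_pi, mem_univ, forall_const, mem_prod]
    constructor
    · intro h
      refine ⟨fun j => ?_, by simpa using h i⟩
      rcases eq_or_ne j i with rfl | hj
      · simp
      · simpa [hj] using h j
    · rintro ⟨hx, hy⟩ j
      rcases eq_or_ne j i with rfl | hj
      · simpa using hy
      · simpa [hj] using hx j
  rw [Measure.map_apply measurable_update' (MeasurableSet.univ_pi hs), hpre, Measure.prod_prod,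
    Measure.pi_pi, ← Finset.mul_prod_erase _ _ (Finset.mem_univ i),
    ← Finset.mul_prod_erase _ _ (Finset.mem_univ i), update_self, measure_univ, one_mul, mul_comm]
  congr 1
  exact Finset.prod_congr rfl fun j hj => by rw [update_of_ne (Finset.ne_of_mem_erase hj)]

variable {μ}

theorem MeasureTheory.Integrable.comp_update {f : (∀ j, α j) → ℝ}
    (hf : Integrable f (Measure.pi μ)) (i : ι) :
    Integrable (fun q : (∀ j, α j) × α i => f (update q.1 i q.2)) ((Measure.pi μ).prod (μ i)) :=
  ((measurePreserving_update μ i).integrable_comp hf.aestronglyMeasurable).2 hf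

theorem integral_eq_integral_integral_update {f : (∀ j, α j) → ℝ}
    (hf : Integrable f (Measure.pi μ)) (i : ι) :
    ∫ x, f x ∂Measure.pi μ = ∫ x, ∫ y, f (update x i y) ∂μ i ∂Measure.pi μ := by
  have e := measurePreserving_update μ i
  rw [← integral_prod _ (hf.comp_update i), ← integral_map e.measurable.aemeasurable
    (by rw [e.map_eq]; exact hf.aestronglyMeasurable), e.map_eq]

theorem integral_le_integral_of_integral_update_le (i : ι) {f g : (∀ j, α j) → ℝ}
    (hf : Integrable f (Measure.pi μ)) (hg : Integrable g (Measure.pi μ))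
    (hfg : ∀ x, ∫ y, f (update x i y) ∂μ i ≤ ∫ y, g (update x i y) ∂μ i) :
    ∫ x, f x ∂Measure.pi μ ≤ ∫ x, g x ∂Measure.pi μ := by
  rw [integral_eq_integral_integral_update hf i, integral_eq_integral_integral_update hg i]
  exact integral_mono (hf.comp_update i).integral_prod_left (hg.comp_update i).integral_prod_left
    hfg

end UpdateCoordinate

noncomputable abbrev uniform01 : Measure ℝ := volume.restrict (Icc (0 : ℝ) 1)

instance : IsProbabilityMeasure uniform01 := ⟨by simp⟩

noncomputable def etaVal (δ : ℝ) (p : ℝ × ℝ) : ℝ :=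
  if p.1 ≤ 1 - δ then 1 else p.2 ^ ((1 : ℝ) / (1 - δ))

noncomputable def resampledClicks (δ : ℝ) (N : ℝ → ℝ) (c : ℝ) : ℝ :=
  ∫ e in Icc (0 : ℝ) 1, N (e ^ ((1 : ℝ) / (1 - δ)) * c)

/-- Expected utility, over its own randomness `p`, of an agent with value `v` bidding `c`, when
it receives `N z` clicks with modified bid `z`. -/
noncomputable def resampledUtility (δ : ℝ) (N : ℝ → ℝ) (c v : ℝ) : ℝ :=
  ∫ p, N (etaVal δ p * c) * (v - c * if etaVal δ p = 1 then 1 else 1 - 1 / δ)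
    ∂(uniform01.prod uniform01)

theorem integrableOn_Icc_comp_rpow_mul {N : ℝ → ℝ} (hN : Monotone N) {q c : ℝ} (hq : 0 ≤ q)
    (hc : 0 ≤ c) : IntegrableOn (fun e => N (e ^ q * c)) (Icc 0 1) :=
  MonotoneOn.integrableOn_isCompact isCompact_Icc fun _ hx _ _ hxy =>
    hN (mul_le_mul_of_nonneg_right (Real.rpow_le_rpow hx.1 hxy hq) hc)

theorem uniform01_real_Iic {r : ℝ} (hr₀ : 0 ≤ r) (hr₁ : r ≤ 1) : uniform01.real (Iic r) = r := by
  have : Iic r ∩ Icc 0 1 = Icc 0 r := by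
    ext x
    simp only [mem_inter_iff, mem_Iic, mem_Icc]
    exact ⟨fun h => ⟨h.2.1, h.1⟩, fun h => ⟨h.2, h.1, h.2.trans hr₁⟩⟩
  rw [measureReal_restrict_apply measurableSet_Iic, this, Real.volume_real_Icc_of_le hr₀, sub_zero]

theorem ae_uniform01_rpow_ne_one {q : ℝ} (hq : 0 < q) : ∀ᵐ e ∂uniform01, e ^ q ≠ 1 := by
  have hne : ∀ᵐ e ∂uniform01, e ≠ 1 := ae_restrict_of_ae (by simp [ae_iff])
  filter_upwards [ae_restrict_mem measurableSet_Icc, hne] with e he he1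
  exact (Real.rpow_lt_one he.1 (he.2.lt_of_ne he1) hq).ne

theorem resampledUtility_eq {δ : ℝ} (hδ₀ : 0 < δ) (hδ₁ : δ < 1) {N : ℝ → ℝ} (hN : Monotone N)
    {c : ℝ} (hc : 0 ≤ c) (v : ℝ) :
    resampledUtility δ N c v =
      (1 - δ) * (N c * (v - c)) + (δ * v + (1 - δ) * c) * resampledClicks δ N c := by
  set q : ℝ := 1 / (1 - δ)
  have hq : 0 < q := by positivity
  set s := Iic (1 - δ)
  set K := N c * (v - c)
  set g : ℝ → ℝ := fun e => N (e ^ q * c) * (v - c * if e ^ q = 1 then 1 else 1 - 1 / δ)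
  have hsplit : ∀ p : ℝ × ℝ, N (etaVal δ p * c) * (v - c * if etaVal δ p = 1 then 1 else 1 - 1 / δ)
      = s.indicator 1 p.1 * K + sᶜ.indicator 1 p.1 * g p.2 := by
    intro p
    by_cases h : p.1 ≤ 1 - δ
    · simp [etaVal, s, h, K]
    · simp [etaVal, s, h, g, q, not_le.mp h]
  -- A resampled multiplier `e ^ q` equals `1` only on the null event `e = 1`.
  have hg : g =ᵐ[uniform01] fun e => N (e ^ q * c) * (v - c * (1 - 1 / δ)) := by
    filter_upwards [ae_uniform01_rpow_ne_one hq] with e he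
    simp [g, he]
  have hgint : Integrable g uniform01 :=
    ((integrableOn_Icc_comp_rpow_mul hN hq.le hc).mul_const _).congr hg.symm
  have hind : ∀ t : Set ℝ, MeasurableSet t → Integrable (t.indicator (1 : ℝ → ℝ)) uniform01 :=
    fun t ht => (integrable_const 1).indicator ht
  have hs : MeasurableSet s := measurableSet_Iic
  rw [resampledUtility, funext hsplit,
    integral_add ((hind s hs).mul_prod (integrable_const K)) ((hind _ hs.compl).mul_prod hgint),
    integral_mul_const, integral_fun_fst, integral_prod_mul, integral_indicator_one hs,
    integral_indicator_one hs.compl, probReal_compl_eq_one_sub hs,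
    uniform01_real_Iic (by linarith) (by linarith),
    integral_congr_ae hg, integral_mul_const]
  change _ + _ * (resampledClicks δ N c * _) = _
  simp only [probReal_univ, one_smul]
  field_simp
  ring

theorem resampledClicks_eq {δ c : ℝ} (hδ : δ < 1) (N : ℝ → ℝ) (hc : 0 < c) :
    resampledClicks δ N c =
      (c ^ (1 - δ))⁻¹ * ∫ u in (0 : ℝ)..c ^ (1 - δ), N (u ^ ((1 : ℝ) / (1 - δ))) := by
  have hγ : 0 < c ^ (1 - δ) := Real.rpow_pos_of_pos hc _
  have hsubst := intervalIntegral.integral_comp_mul_right (fun u => N (u ^ ((1 : ℝ) / (1 - δ))))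
    hγ.ne' (a := 0) (b := 1)
  simp only [zero_mul, one_mul, smul_eq_mul] at hsubst
  rw [resampledClicks, integral_Icc_eq_integral_Ioc, ← intervalIntegral.integral_of_le zero_le_one,
    ← hsubst]
  refine intervalIntegral.integral_congr fun e he => ?_
  rw [uIcc_of_le zero_le_one] at he
  rw [Real.mul_rpow he.1 hγ.le, one_div, Real.rpow_rpow_inv hc.le (by linarith)]

theorem resampledClicks_zero (δ : ℝ) (N : ℝ → ℝ) : resampledClicks δ N 0 = N 0 := by
  simp [resampledClicks]

theorem apply_zero_le_resampledClicks {δ c : ℝ} (hδ : δ < 1) {N : ℝ → ℝ} (hN : Monotone N)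
    (hc : 0 ≤ c) : N 0 ≤ resampledClicks δ N c :=
  calc N 0 = ∫ _ in Icc (0 : ℝ) 1, N 0 := by simp
    _ ≤ _ := setIntegral_mono_on (integrableOn_const measure_Icc_lt_top.ne)
        (integrableOn_Icc_comp_rpow_mul hN (div_nonneg zero_le_one (by linarith)) hc)
        measurableSet_Icc fun e he => hN (mul_nonneg (Real.rpow_nonneg he.1 _) hc)

theorem resampledUtility_le_truthful {δ : ℝ} (hδ₀ : 0 < δ) (hδ₁ : δ < 1) {N : ℝ → ℝ}
    (hN : Monotone N) {c v : ℝ} (hc : 0 ≤ c) (hv : 0 ≤ v) :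
    resampledUtility δ N c v ≤ resampledUtility δ N v v := by
  have htruthful : resampledUtility δ N v v = v * resampledClicks δ N v := by
    rw [resampledUtility_eq hδ₀ hδ₁ hN hv]; ring
  rw [htruthful, resampledUtility_eq hδ₀ hδ₁ hN hc]
  rcases hc.eq_or_lt with rfl | hc
  · rw [resampledClicks_zero]
    nlinarith [apply_zero_le_resampledClicks hδ₁ hN hv]
  have hRHS : v * resampledClicks δ N v =
      v * ((v ^ (1 - δ))⁻¹ * ∫ u in (0 : ℝ)..v ^ (1 - δ), N (u ^ ((1 : ℝ) / (1 - δ)))) := by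
    rcases hv.eq_or_lt with rfl | hv
    · simp
    · rw [resampledClicks_eq hδ₁ N hv]
  rw [resampledClicks_eq hδ₁ N hc, hRHS]
  set M : ℝ → ℝ := fun u => N (u ^ ((1 : ℝ) / (1 - δ)))
  have hM : MonotoneOn M (Ici 0) := fun x hx y _ hxy =>
    hN (Real.rpow_le_rpow hx hxy (div_nonneg zero_le_one (by linarith)))
  have hMc : M (c ^ (1 - δ)) = N c := by
    simp only [M, one_div, Real.rpow_rpow_inv hc.le (by linarith : 1 - δ ≠ 0)]
  have hβ : c ^ (1 - δ) ∈ Ici 0 := Real.rpow_nonneg hc.le _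
  have hLc := hM.intervalIntegral_add_mul_sub_le ordConnected_Ici self_mem_Ici hβ self_mem_Ici
  have hsub := hM.intervalIntegral_add_mul_sub_le ordConnected_Ici self_mem_Ici hβ
    (Real.rpow_nonneg hv (1 - δ))
  rw [hMc, intervalIntegral.integral_same] at hLc
  rw [hMc] at hsub
  exact utility_le_of_subgradient hδ₀ hδ₁.le hv hc (by linarith) hsub

theorem measurable_etaOf {n : ℕ} (δ : ℝ) (k : Fin n) :
    Measurable fun ω : Fin n → ℝ × ℝ => etaOf δ ω k :=
  Measurable.ite (measurableSet_le (measurable_pi_apply k).fst measurable_const) measurable_const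
    ((measurable_pi_apply k).snd.pow_const _)

theorem mechUtil_eq_ite {n : ℕ} (A : (Fin n → ℝ) → ℕ → Fin n) (ρ : ℕ → Fin n → Bool) (δ : ℝ)
    (bid : Fin n → ℝ) (i : Fin n) (vi : ℝ) (t : ℕ) (ω : Fin n → ℝ × ℝ) :
    mechUtil A ρ δ bid i vi t ω =
      if A (fun k => etaOf δ ω k * bid k) t = i ∧ ρ t i = true then
        vi - bid i * (if etaOf δ ω i = 1 then 1 else 1 - 1 / δ) else 0 := by
  unfold mechUtil
  split_ifs <;> simp_all

theorem measurable_mechUtil {n : ℕ} {A : (Fin n → ℝ) → ℕ → Fin n} {t : ℕ}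
    (hA : Measurable fun y => A y t) (ρ : ℕ → Fin n → Bool) (δ : ℝ) (bid : Fin n → ℝ)
    (i : Fin n) (vi : ℝ) : Measurable (mechUtil A ρ δ bid i vi t) := by
  have hy : Measurable fun ω : Fin n → ℝ × ℝ => A (fun k => etaOf δ ω k * bid k) t :=
    hA.comp (measurable_pi_lambda _ fun k => (measurable_etaOf δ k).mul_const _)
  simp_rw [funext (mechUtil_eq_ite A ρ δ bid i vi t)]
  have hη : MeasurableSet {ω : Fin n → ℝ × ℝ | etaOf δ ω i = 1} :=
    measurable_etaOf δ i (measurableSet_singleton 1)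
  exact Measurable.ite ((hy (measurableSet_singleton i)).inter (MeasurableSet.const _))
    (measurable_const.sub (measurable_const.mul (measurable_const.ite hη measurable_const)))
    measurable_const

theorem abs_mechUtil_le {n : ℕ} (A : (Fin n → ℝ) → ℕ → Fin n) (ρ : ℕ → Fin n → Bool) (δ : ℝ)
    (bid : Fin n → ℝ) (i : Fin n) (vi : ℝ) (t : ℕ) (ω : Fin n → ℝ × ℝ) :
    |mechUtil A ρ δ bid i vi t ω| ≤ |vi - bid i| + |vi - bid i * (1 - 1 / δ)| := by
  rw [mechUtil_eq_ite]
  split_ifs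
  · simp
  · simp
  · rw [abs_zero]; positivity

instance (n : ℕ) : IsProbabilityMeasure (resampMeasure n) := by
  unfold resampMeasure; infer_instance

theorem integrable_mechUtil {n : ℕ} {A : (Fin n → ℝ) → ℕ → Fin n} {t : ℕ}
    (hA : Measurable fun y => A y t) (ρ : ℕ → Fin n → Bool) (δ : ℝ) (bid : Fin n → ℝ)
    (i : Fin n) (vi : ℝ) : Integrable (mechUtil A ρ δ bid i vi t) (resampMeasure n) :=
  .of_bound (measurable_mechUtil hA ρ δ bid i vi).aestronglyMeasurable _
    (.of_forall fun ω => abs_mechUtil_le A ρ δ bid i vi t ω)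

theorem mechUtil_self_nonneg {n : ℕ} (A : (Fin n → ℝ) → ℕ → Fin n) (ρ : ℕ → Fin n → Bool)
    {δ : ℝ} (hδ : 0 ≤ δ) {bid : Fin n → ℝ} {i : Fin n} (hb : 0 ≤ bid i) (t : ℕ)
    (ω : Fin n → ℝ × ℝ) : 0 ≤ mechUtil A ρ δ bid i (bid i) t ω := by
  rw [mechUtil_eq_ite]
  split_ifs
  · simp
  · rw [mul_one_sub, sub_sub_cancel]; positivity
  · rfl

noncomputable def clickCount {n : ℕ} (A : (Fin n → ℝ) → ℕ → Fin n) (ρ : ℕ → Fin n → Bool)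
    (T : ℕ) (y : Fin n → ℝ) (i : Fin n) (z : ℝ) : ℝ :=
  ((Finset.range T).filter fun s => A (update y i z) s = i ∧ ρ s i = true).card

theorem monotone_clickCount {n : ℕ} {A : (Fin n → ℝ) → ℕ → Fin n} {ρ : ℕ → Fin n → Bool}
    (hA : ∀ (bid : Fin n → ℝ) (i : Fin n) (v : ℝ) (t : ℕ), bid i ≤ v →
      ((Finset.range t).filter (fun s => A bid s = i ∧ ρ s i = true)).card ≤
      ((Finset.range t).filter (fun s => A (update bid i v) s = i ∧ ρ s i = true)).card)
    (T : ℕ) (y : Fin n → ℝ) (i : Fin n) : Monotone (clickCount A ρ T y i) := fun z z' hz => by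
  have := hA (update y i z) i z' T (by rwa [update_self])
  rw [update_idem] at this
  unfold clickCount
  exact_mod_cast this

theorem clickCount_update {n : ℕ} (A : (Fin n → ℝ) → ℕ → Fin n) (ρ : ℕ → Fin n → Bool)
    (T : ℕ) (y : Fin n → ℝ) (i : Fin n) (a : ℝ) :
    clickCount A ρ T (update y i a) i = clickCount A ρ T y i := by
  ext z; simp only [clickCount, update_idem]

theorem integral_sum_mechUtil_update {n : ℕ} (A : (Fin n → ℝ) → ℕ → Fin n)
    (ρ : ℕ → Fin n → Bool) (δ : ℝ) (bid : Fin n → ℝ) (i : Fin n) (vi : ℝ) (T : ℕ)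
    (ω : Fin n → ℝ × ℝ) :
    ∫ p, ∑ t ∈ Finset.range T, mechUtil A ρ δ bid i vi t (update ω i p)
        ∂(uniform01.prod uniform01) =
      resampledUtility δ (clickCount A ρ T (fun k => etaOf δ ω k * bid k) i) (bid i) vi := by
  have hy : ∀ p, (fun k => etaOf δ (update ω i p) k * bid k) =
      update (fun k => etaOf δ ω k * bid k) i (etaVal δ p * bid i) := fun p => by
    ext k
    rcases eq_or_ne k i with rfl | hk
    · simp [etaOf, etaVal]
    · simp [etaOf, hk]
  have hηi : ∀ p, etaOf δ (update ω i p) i = etaVal δ p := fun p => by simp [etaOf, etaVal]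
  simp_rw [mechUtil_eq_ite, hy, hηi, ← Finset.sum_filter, Finset.sum_const, nsmul_eq_mul]
  rfl

theorem resampling_of_ex_post_monotone_is_EPIC_EPIR_general
    {n d : ℕ} (T : ℕ)
    (Alloc : (ℕ → Fin d → ℝ) → (ℕ → Fin n → Bool) → (Fin n → ℝ) → ℕ → Fin n)
    (hmeas : ∀ (x : ℕ → Fin d → ℝ) (ρ : ℕ → Fin n → Bool) (t : ℕ),
      Measurable fun bid => Alloc x ρ bid t)
    (hmono : ∀ (x : ℕ → Fin d → ℝ) (ρ : ℕ → Fin n → Bool) (bid : Fin n → ℝ)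
      (i : Fin n) (v : ℝ) (t : ℕ), bid i ≤ v →
      ((Finset.range t).filter (fun s => Alloc x ρ bid s = i ∧ ρ s i = true)).card ≤
      ((Finset.range t).filter
        (fun s => Alloc x ρ (Function.update bid i v) s = i ∧ ρ s i = true)).card)
    (δ : ℝ) (hδ : δ ∈ Set.Ioo (0 : ℝ) 1) :
    -- EPIC
    (∀ (x : ℕ → Fin d → ℝ) (ρ : ℕ → Fin n → Bool) (i : Fin n)
        (b : Fin n → ℝ) (vi : ℝ),
        (∀ j, b j ∈ Set.Icc (0 : ℝ) 1) → vi ∈ Set.Icc (0 : ℝ) 1 →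
        ∑ t ∈ Finset.range T,
            ∫ ω, mechUtil (Alloc x ρ) ρ δ (Function.update b i vi) i vi t ω
              ∂(resampMeasure n) ≥
          ∑ t ∈ Finset.range T,
            ∫ ω, mechUtil (Alloc x ρ) ρ δ b i vi t ω ∂(resampMeasure n)) ∧
    -- EPIR
    (∀ (x : ℕ → Fin d → ℝ) (ρ : ℕ → Fin n → Bool) (i : Fin n)
        (b : Fin n → ℝ) (t : ℕ),
        (∀ j, b j ∈ Set.Icc (0 : ℝ) 1) →
        0 ≤ ∫ ω, mechUtil (Alloc x ρ) ρ δ b i (b i) t ω ∂(resampMeasure n)) := by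
  obtain ⟨hδ₀, hδ₁⟩ := hδ
  refine ⟨fun x ρ i b vi hb hvi => ?_, fun x ρ i b t hb =>
    integral_nonneg fun ω => mechUtil_self_nonneg _ ρ hδ₀.le (hb i).1 t ω⟩
  have hint : ∀ bid t, Integrable (mechUtil (Alloc x ρ) ρ δ bid i vi t) (resampMeasure n) :=
    fun bid t => integrable_mechUtil (hmeas x ρ t) ρ δ bid i vi
  rw [ge_iff_le, ← integral_finsetSum _ fun t _ => hint b t,
    ← integral_finsetSum _ fun t _ => hint _ t]
  refine integral_le_integral_of_integral_update_le (μ := fun _ => uniform01.prod uniform01) i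
    (integrable_finsetSum _ fun t _ => hint b t) (integrable_finsetSum _ fun t _ => hint _ t)
    fun ω => ?_
  have hy : (fun k => etaOf δ ω k * update b i vi k) =
      update (fun k => etaOf δ ω k * b k) i (etaOf δ ω i * vi) := by
    ext k
    rcases eq_or_ne k i with rfl | hk
    · simp
    · simp [hk]
  rw [integral_sum_mechUtil_update, integral_sum_mechUtil_update, hy, clickCount_update,
    update_self]
  exact resampledUtility_le_truthful hδ₀ hδ₁ (monotone_clickCount (hmono x ρ) T _ i) (hb i).1 hvi.1

/-- **Theorem (Babaioff et al., Theorem 4.5).** Let `A` be an ex-post monotone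
allocation rule (for every fixed context-arrival sequence and click realization,
the number of clicks an agent gets in the first `t` rounds is monotone in its own
bid).  Applying the self-resampling transformation with parameter `δ ∈ (0,1)`
yields a mechanism that is EPIC and EPIR: truthful reporting maximizes every
agent's total expected utility for every realization of contexts and clicks, and
under truthful bidding every agent's expected utility at every round is
non-negative (the expectation being over the mechanism's internal randomization). -/
theorem resampling_of_ex_post_monotone_is_EPIC_EPIR
    {n d : ℕ} [NeZero n] (T : ℕ)
    (Alloc : (ℕ → Fin d → ℝ) → (ℕ → Fin n → Bool) → (Fin n → ℝ) → ℕ → Fin n)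
    (hmeas : ∀ (x : ℕ → Fin d → ℝ) (ρ : ℕ → Fin n → Bool) (t : ℕ),
      Measurable fun bid => Alloc x ρ bid t)
    (hmono : ∀ (x : ℕ → Fin d → ℝ) (ρ : ℕ → Fin n → Bool) (bid : Fin n → ℝ)
      (i : Fin n) (v : ℝ) (t : ℕ), bid i ≤ v →
      ((Finset.range t).filter (fun s => Alloc x ρ bid s = i ∧ ρ s i = true)).card ≤
      ((Finset.range t).filter
        (fun s => Alloc x ρ (Function.update bid i v) s = i ∧ ρ s i = true)).card)
    (δ : ℝ) (hδ : δ ∈ Set.Ioo (0 : ℝ) 1) :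
    -- EPIC
    (∀ (x : ℕ → Fin d → ℝ) (ρ : ℕ → Fin n → Bool) (i : Fin n)
        (b : Fin n → ℝ) (vi : ℝ),
        (∀ j, b j ∈ Set.Icc (0 : ℝ) 1) → vi ∈ Set.Icc (0 : ℝ) 1 →
        ∑ t ∈ Finset.range T,
            ∫ ω, mechUtil (Alloc x ρ) ρ δ (Function.update b i vi) i vi t ω
              ∂(resampMeasure n) ≥
          ∑ t ∈ Finset.range T,
            ∫ ω, mechUtil (Alloc x ρ) ρ δ b i vi t ω ∂(resampMeasure n)) ∧
    -- EPIR
    (∀ (x : ℕ → Fin d → ℝ) (ρ : ℕ → Fin n → Bool) (i : Fin n)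
        (b : Fin n → ℝ) (t : ℕ),
        (∀ j, b j ∈ Set.Icc (0 : ℝ) 1) →
        0 ≤ ∫ ω, mechUtil (Alloc x ρ) ρ δ b i (b i) t ω ∂(resampMeasure n)) :=
  resampling_of_ex_post_monotone_is_EPIC_EPIR_general T Alloc hmeas hmono δ hδ
end

section
/- Let A be a d×d symmetric positive definite real matrix all of whose eigenvalues are at least 1, let x ∈ R^d with ‖x‖_2 ≤ 1, and let B = A + x x^T. Then the eigenvalues λ_1,…,λ_d of A and ν_1,…,ν_d of B can be arranged so that λ_j ≤ ν_j for all j, and x^T A^{-1} x ≤ 10 Σ_{j=1}^d (ν_j − λ_j)/λ_j. (In the SupLinUCB-S setting: for each stage s and agent i, if Ψ_{i,t+1}^s = Ψ_{i,t}^s ∪ {t}, then the eigenvalues of A_{i,t} and A_{i,t+1} can be arranged so that λ_{i,t}^j ≤ λ_{i,t+1}^j for all j, and s_{i,t}^2 ≤ 10 Σ_{j=1}^d (λ_{i,t+1}^j − λ_{i,t}^j)/λ_{i,t}^j.) -/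
/-!
Sort both spectra increasingly. Since `B - A = x xᵀ` is positive semidefinite, Weyl monotonicity
gives `λ_k ≤ ν_k`: a dimension count yields `z ≠ 0` lying in the span of the top `d - k`
eigenvectors of `A` and of the bottom `k + 1` eigenvectors of `B`, so
`λ_k ‖z‖² ≤ zᵀ A z ≤ zᵀ B z ≤ ν_k ‖z‖²`.

For the width, the matrix determinant lemma gives `∏ ν_j / λ_j = det B / det A = 1 + s` with
`s = xᵀ A⁻¹ x`, and `0 ≤ s ≤ ‖x‖² ≤ 1` because `A ≥ I`. Hence
`s ≤ 2 log (1 + s) = 2 ∑ log (ν_j / λ_j) ≤ 2 ∑ (ν_j - λ_j) / λ_j`.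
-/

open Matrix

namespace Matrix

theorem exists_ne_zero_mulVec_eq_zero_on {K m m' n : Type*} [Field K] [Fintype n]
    (P : Matrix m n K) (Q : Matrix m' n K) (s : Finset m) (t : Finset m')
    (hst : s.card + t.card < Fintype.card n) :
    ∃ z ≠ 0, (∀ i ∈ s, (P *ᵥ z) i = 0) ∧ ∀ i ∈ t, (Q *ᵥ z) i = 0 := by
  let L : (n → K) →ₗ[K] (s → K) × (t → K) :=
    (LinearMap.funLeft K K Subtype.val ∘ₗ P.mulVecLin).prod
      (LinearMap.funLeft K K Subtype.val ∘ₗ Q.mulVecLin)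
  have hker : LinearMap.ker L ≠ ⊥ := LinearMap.ker_ne_bot_of_finrank_lt (by simpa using hst)
  obtain ⟨z, hz, hz0⟩ := (Submodule.ne_bot_iff _).1 hker
  simp only [LinearMap.mem_ker, L, LinearMap.prod_apply, Function.prod, Prod.mk_eq_zero,
    funext_iff] at hz
  exact ⟨z, hz0, fun i hi => hz.1 ⟨i, hi⟩, fun i hi => hz.2 ⟨i, hi⟩⟩

variable {n : Type*} [Fintype n] [DecidableEq n]

theorem det_one_add_vecMulVec {R : Type*} [CommRing R] (u v : n → R) :
    (1 + vecMulVec u v).det = 1 + v ⬝ᵥ u := by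
  rw [vecMulVec_eq Unit, det_one_add_replicateCol_mul_replicateRow]

theorem det_add_vecMulVec {R : Type*} [CommRing R] {A : Matrix n n R} (hA : IsUnit A.det)
    (u v : n → R) : (A + vecMulVec u v).det = A.det * (1 + v ⬝ᵥ (A⁻¹ *ᵥ u)) := by
  have hfactor : A + vecMulVec u v = A * (1 + vecMulVec (A⁻¹ *ᵥ u) v) := by
    rw [Matrix.mul_add, Matrix.mul_one, mul_vecMulVec, mulVec_mulVec, mul_nonsing_inv A hA,
      one_mulVec]
  rw [hfactor, det_mul, det_one_add_vecMulVec]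

theorem dotProduct_mul_diagonal_mul_star_mulVec (U : Matrix n n ℝ) (μ z : n → ℝ) :
    z ⬝ᵥ ((U * diagonal μ * star U) *ᵥ z) = ∑ i, μ i * (star U *ᵥ z) i ^ 2 := by
  have hz : vecMul z U = star U *ᵥ z := by
    rw [star_eq_conjTranspose, conjTranspose_eq_transpose_of_trivial, mulVec_transpose]
  rw [← mulVec_mulVec, ← mulVec_mulVec, dotProduct_mulVec, hz, dotProduct]
  exact Finset.sum_congr rfl fun i _ => by rw [mulVec_diagonal]; ring

theorem dotProduct_self_eq_sum_sq_star_mulVec {U : Matrix n n ℝ} (hU : U ∈ unitaryGroup n ℝ)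
    (z : n → ℝ) : z ⬝ᵥ z = ∑ i, (star U *ᵥ z) i ^ 2 := by
  simpa [Unitary.mul_star_self_of_mem hU] using dotProduct_mul_diagonal_mul_star_mulVec U 1 z

namespace IsHermitian

section EigenCoords

variable {A : Matrix n n ℝ} (hA : A.IsHermitian)

noncomputable def eigenCoords (z : n → ℝ) : n → ℝ :=
  star (hA.eigenvectorUnitary : Matrix n n ℝ) *ᵥ z

theorem eq_mul_diagonal_mul_star :
    A = (hA.eigenvectorUnitary : Matrix n n ℝ) * diagonal hA.eigenvalues *
      star (hA.eigenvectorUnitary : Matrix n n ℝ) := by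
  simpa using hA.spectral_theorem

theorem inv_eq_mul_diagonal_mul_star (h0 : ∀ i, hA.eigenvalues i ≠ 0) :
    A⁻¹ = (hA.eigenvectorUnitary : Matrix n n ℝ) * diagonal hA.eigenvalues⁻¹ *
      star (hA.eigenvectorUnitary : Matrix n n ℝ) := by
  set U : Matrix n n ℝ := (hA.eigenvectorUnitary : Matrix n n ℝ)
  have hdiag : diagonal hA.eigenvalues * diagonal hA.eigenvalues⁻¹ = 1 := by
    rw [diagonal_mul_diagonal, ← diagonal_one]
    exact congrArg diagonal (funext fun i => mul_inv_cancel₀ (h0 i))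
  refine inv_eq_right_inv ?_
  calc A * (U * diagonal hA.eigenvalues⁻¹ * star U)
      = U * (diagonal hA.eigenvalues * (star U * U) * diagonal hA.eigenvalues⁻¹) * star U := by
        nth_rewrite 1 [hA.eq_mul_diagonal_mul_star]; simp only [Matrix.mul_assoc]; rfl
    _ = 1 := by
        rw [Unitary.star_mul_self_of_mem hA.eigenvectorUnitary.2, Matrix.mul_one, hdiag,
          Matrix.mul_one, Unitary.mul_star_self_of_mem hA.eigenvectorUnitary.2]

theorem dotProduct_mulVec_eq_sum (z : n → ℝ) :
    z ⬝ᵥ (A *ᵥ z) = ∑ i, hA.eigenvalues i * hA.eigenCoords z i ^ 2 := by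
  conv_lhs => rw [hA.eq_mul_diagonal_mul_star]
  exact dotProduct_mul_diagonal_mul_star_mulVec _ _ z

theorem dotProduct_inv_mulVec_eq_sum (h0 : ∀ i, hA.eigenvalues i ≠ 0) (z : n → ℝ) :
    z ⬝ᵥ (A⁻¹ *ᵥ z) = ∑ i, (hA.eigenvalues i)⁻¹ * hA.eigenCoords z i ^ 2 := by
  rw [hA.inv_eq_mul_diagonal_mul_star h0]
  exact dotProduct_mul_diagonal_mul_star_mulVec _ _ z

theorem dotProduct_self_eq_sum (z : n → ℝ) : z ⬝ᵥ z = ∑ i, hA.eigenCoords z i ^ 2 :=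
  dotProduct_self_eq_sum_sq_star_mulVec hA.eigenvectorUnitary.2 z

theorem mul_dotProduct_self_le_dotProduct_mulVec {μ : ℝ} {z : n → ℝ}
    (h : ∀ i, hA.eigenCoords z i ≠ 0 → μ ≤ hA.eigenvalues i) :
    μ * (z ⬝ᵥ z) ≤ z ⬝ᵥ (A *ᵥ z) := by
  rw [hA.dotProduct_self_eq_sum, hA.dotProduct_mulVec_eq_sum, Finset.mul_sum]
  refine Finset.sum_le_sum fun i _ => ?_
  by_cases hi : hA.eigenCoords z i = 0
  · simp [hi]
  · exact mul_le_mul_of_nonneg_right (h i hi) (sq_nonneg _)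

theorem dotProduct_mulVec_le_mul_dotProduct_self {μ : ℝ} {z : n → ℝ}
    (h : ∀ i, hA.eigenCoords z i ≠ 0 → hA.eigenvalues i ≤ μ) :
    z ⬝ᵥ (A *ᵥ z) ≤ μ * (z ⬝ᵥ z) := by
  rw [hA.dotProduct_self_eq_sum, hA.dotProduct_mulVec_eq_sum, Finset.mul_sum]
  refine Finset.sum_le_sum fun i _ => ?_
  by_cases hi : hA.eigenCoords z i = 0
  · simp [hi]
  · exact mul_le_mul_of_nonneg_right (h i hi) (sq_nonneg _)

theorem dotProduct_inv_mulVec_le_dotProduct_self (h1 : ∀ i, 1 ≤ hA.eigenvalues i)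
    (z : n → ℝ) : z ⬝ᵥ (A⁻¹ *ᵥ z) ≤ z ⬝ᵥ z := by
  rw [hA.dotProduct_inv_mulVec_eq_sum fun i => (zero_lt_one.trans_le (h1 i)).ne',
    hA.dotProduct_self_eq_sum]
  exact Finset.sum_le_sum fun i _ =>
    mul_le_of_le_one_left (sq_nonneg _) (inv_le_one_of_one_le₀ (h1 i))

end EigenCoords

theorem eigenvalues_sort_le_of_posSemidef_sub {d : ℕ} {A B : Matrix (Fin d) (Fin d) ℝ}
    (hA : A.IsHermitian) (hB : B.IsHermitian) (hAB : (B - A).PosSemidef) (k : Fin d) :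
    hA.eigenvalues (Tuple.sort hA.eigenvalues k) ≤
      hB.eigenvalues (Tuple.sort hB.eigenvalues k) := by
  set σ := Tuple.sort hA.eigenvalues
  set τ := Tuple.sort hB.eigenvalues
  -- `z` avoids the `k` lowest eigendirections of `A` and the `d - 1 - k` highest ones of `B`.
  obtain ⟨z, hz0, hzA, hzB⟩ := exists_ne_zero_mulVec_eq_zero_on
    (star (hA.eigenvectorUnitary : Matrix (Fin d) (Fin d) ℝ))
    (star (hB.eigenvectorUnitary : Matrix (Fin d) (Fin d) ℝ))
    ((Finset.Iio k).map σ.toEmbedding) ((Finset.Ioi k).map τ.toEmbedding)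
    (by simp only [Finset.card_map, Fin.card_Iio, Fin.card_Ioi, Fintype.card_fin]; omega)
  have hlow : hA.eigenvalues (σ k) * (z ⬝ᵥ z) ≤ z ⬝ᵥ (A *ᵥ z) := by
    refine hA.mul_dotProduct_self_le_dotProduct_mulVec fun i hi => ?_
    have hk : k ≤ σ.symm i := not_lt.1 fun hlt =>
      hi (hzA i (Finset.mem_map_equiv.2 (by simpa using hlt)))
    simpa [σ] using Tuple.monotone_sort hA.eigenvalues hk
  have hup : z ⬝ᵥ (B *ᵥ z) ≤ hB.eigenvalues (τ k) * (z ⬝ᵥ z) := by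
    refine hB.dotProduct_mulVec_le_mul_dotProduct_self fun i hi => ?_
    have hk : τ.symm i ≤ k := not_lt.1 fun hlt =>
      hi (hzB i (Finset.mem_map_equiv.2 (by simpa using hlt)))
    simpa [τ] using Tuple.monotone_sort hB.eigenvalues hk
  have hmono : z ⬝ᵥ (A *ᵥ z) ≤ z ⬝ᵥ (B *ᵥ z) := by
    have := hAB.dotProduct_mulVec_nonneg z
    rw [star_trivial, sub_mulVec, dotProduct_sub] at this
    linarith
  have hz : 0 < z ⬝ᵥ z := by simpa using dotProduct_star_self_pos_iff.2 hz0
  exact le_of_mul_le_mul_right (hlow.trans (hmono.trans hup)) hz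

end IsHermitian

end Matrix

namespace Real

theorem le_two_mul_log_one_add {s : ℝ} (h0 : 0 ≤ s) (h1 : s ≤ 1) : s ≤ 2 * log (1 + s) := by
  have hpos : 0 < 1 + s := by linarith
  have hlog : 1 - (1 + s)⁻¹ ≤ log (1 + s) := one_sub_inv_le_log_of_pos hpos
  have : s ≤ 2 * (1 - (1 + s)⁻¹) := by
    field_simp
    nlinarith
  linarith

theorem log_prod_le_sum_sub_one {ι : Type*} (s : Finset ι) {r : ι → ℝ}
    (hr : ∀ i ∈ s, 0 < r i) : log (∏ i ∈ s, r i) ≤ ∑ i ∈ s, (r i - 1) := by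
  rw [log_prod fun i hi => (hr i hi).ne']
  exact Finset.sum_le_sum fun i hi => log_le_sub_one_of_pos (hr i hi)

end Real

/-- **Lemma 1 (after Chu et al., Lemma 2).** Let `A` be a `d × d` symmetric positive
definite real matrix all of whose eigenvalues are at least `1`, let `x ∈ ℝ^d` with
`‖x‖₂ ≤ 1`, and let `B = A + x xᵀ`.  Then the eigenvalues `λ_1, …, λ_d` of `A` and
`ν_1, …, ν_d` of `B` can be arranged so that `λ_j ≤ ν_j` for all `j`, and
`xᵀ A⁻¹ x ≤ 10 · ∑_j (ν_j − λ_j) / λ_j`. -/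
theorem eigenvalue_width_bound
    {d : ℕ} (A : Matrix (Fin d) (Fin d) ℝ)
    (hA : A.IsHermitian) (hApd : A.PosDef)
    (hone : ∀ j, 1 ≤ hA.eigenvalues j)
    (x : Fin d → ℝ) (hx : ∑ j, (x j) ^ 2 ≤ 1)
    (hB : (A + vecMulVec x x).IsHermitian) :
    ∃ σ τ : Equiv.Perm (Fin d),
      (∀ j, hA.eigenvalues (σ j) ≤ hB.eigenvalues (τ j)) ∧
      x ⬝ᵥ (A⁻¹ *ᵥ x) ≤
        10 * ∑ j, (hB.eigenvalues (τ j) - hA.eigenvalues (σ j)) / hA.eigenvalues (σ j) := by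
  set σ := Tuple.sort hA.eigenvalues
  set τ := Tuple.sort hB.eigenvalues
  have hdom : ∀ j, hA.eigenvalues (σ j) ≤ hB.eigenvalues (τ j) :=
    hA.eigenvalues_sort_le_of_posSemidef_sub hB (by simpa using posSemidef_vecMulVec_self_star x)
  refine ⟨σ, τ, hdom, ?_⟩
  set s := x ⬝ᵥ (A⁻¹ *ᵥ x)
  have hs0 : 0 ≤ s := by simpa using hApd.inv.posSemidef.dotProduct_mulVec_nonneg x
  have hs1 : s ≤ 1 := (hA.dotProduct_inv_mulVec_le_dotProduct_self hone x).trans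
    (by simpa [dotProduct, sq] using hx)
  have hpos : ∀ j, 0 < hA.eigenvalues (σ j) := fun j => hApd.eigenvalues_pos _
  have hprod : ∏ j, hB.eigenvalues (τ j) / hA.eigenvalues (σ j) = 1 + s := by
    have hdetA : A.det = ∏ j, hA.eigenvalues j := by simpa using hA.det_eq_prod_eigenvalues
    have hdetB : (A + vecMulVec x x).det = ∏ j, hB.eigenvalues j := by
      simpa using hB.det_eq_prod_eigenvalues
    rw [Finset.prod_div_distrib, Equiv.prod_comp σ, Equiv.prod_comp τ, ← hdetA, ← hdetB,
      det_add_vecMulVec hApd.det_pos.ne'.isUnit, mul_div_cancel_left₀ _ hApd.det_pos.ne']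
  have hsum :
      0 ≤ ∑ j, (hB.eigenvalues (τ j) - hA.eigenvalues (σ j)) / hA.eigenvalues (σ j) :=
    Finset.sum_nonneg fun j _ => div_nonneg (sub_nonneg.2 (hdom j)) (hpos j).le
  calc s ≤ 2 * Real.log (1 + s) := Real.le_two_mul_log_one_add hs0 hs1
    _ ≤ 2 * ∑ j, (hB.eigenvalues (τ j) / hA.eigenvalues (σ j) - 1) := by
      rw [← hprod]
      gcongr
      exact Real.log_prod_le_sum_sub_one _ fun j _ => div_pos ((hpos j).trans_le (hdom j)) (hpos j)
    _ ≤ 10 * ∑ j, (hB.eigenvalues (τ j) - hA.eigenvalues (σ j)) / hA.eigenvalues (σ j) := by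
      simp only [div_sub_one (hpos _).ne']
      linarith
end
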